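/- arXiv:math/0606541 — 6 statements merged into one kernel-verified Lean document; each statement's English description precedes it below -/
import Mathlib

section
/- Let P be an n × n stochastic matrix (nonnegative real entries, all row sums equal to 1) that is irreducible in the sense that for every pair of indices i, j there exists an integer m ≥ 1 with (P^m)_{ij} > 0, and let k be the number of complex eigenvalues of P of modulus one. Then the sequence of powers P^k, P^{2k}, P^{3k}, … converges (entrywise) to a matrix Q satisfying: Q² = Q, PQ = QP, Q is stochastic, and Q has rank k. Moreover, regarding P and Q as linear operators on ℂⁿ equipped with the supremum norm, for every linear functional ρ on ℂⁿ one has lim_{r→∞} ‖ρ ∘ P^r‖ = ‖ρ ∘ Q‖. -/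
open Filter Matrix Polynomial Module

namespace Stmt13

lemma re_eq_norm {z : ℂ} (h : z.re = ‖z‖) : z = (‖z‖ : ℝ) := by
  have h2 : ‖z‖ ^ 2 = z.re ^ 2 + z.im ^ 2 := by
    rw [Complex.sq_norm, Complex.normSq_apply]; ring
  have hre : 0 ≤ ‖z‖ := norm_nonneg z
  have him : z.im = 0 := by nlinarith [sq_nonneg z.im]
  exact Complex.ext (by simp [← h]) (by simp [him])

variable {n : ℕ}

lemma stoch_mul {A B : Matrix (Fin n) (Fin n) ℝ}
    (hA1 : ∀ i j, 0 ≤ A i j) (hA2 : ∀ i, ∑ j, A i j = 1)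
    (hB1 : ∀ i j, 0 ≤ B i j) (hB2 : ∀ i, ∑ j, B i j = 1) :
    (∀ i j, 0 ≤ (A * B) i j) ∧ (∀ i, ∑ j, (A * B) i j = 1) := by
  constructor
  · intro i j
    rw [Matrix.mul_apply]
    exact Finset.sum_nonneg fun l _ => mul_nonneg (hA1 i l) (hB1 l j)
  · intro i
    simp_rw [Matrix.mul_apply]
    rw [Finset.sum_comm]
    simp_rw [← Finset.mul_sum, hB2]
    simpa using hA2 i

lemma stoch_pow {P : Matrix (Fin n) (Fin n) ℝ}
    (h1 : ∀ i j, 0 ≤ P i j) (h2 : ∀ i, ∑ j, P i j = 1) (m : ℕ) :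
    (∀ i j, 0 ≤ (P ^ m) i j) ∧ (∀ i, ∑ j, (P ^ m) i j = 1) := by
  induction m with
  | zero =>
    constructor
    · intro i j
      by_cases h : i = j <;> simp [Matrix.one_apply, h]
    · intro i; simp [Matrix.one_apply]
  | succ m ih =>
    rw [pow_succ]
    exact stoch_mul ih.1 ih.2 h1 h2

lemma map_pow' (P : Matrix (Fin n) (Fin n) ℝ) (m : ℕ) :
    (P ^ m).map (fun r : ℝ => (r : ℂ)) = (P.map (fun r : ℝ => (r : ℂ))) ^ m := by
  have h : ∀ Q : Matrix (Fin n) (Fin n) ℝ,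
      Q.map (fun r : ℝ => (r : ℂ)) = (algebraMap ℝ ℂ).mapMatrix Q := fun Q => rfl
  rw [h, h, ← map_pow]

lemma mulVec_apply' (M : Matrix (Fin n) (Fin n) ℂ) (x : Fin n → ℂ) (i : Fin n) :
    M.mulVec x i = ∑ j, M i j * x j := rfl

lemma mulVec_contract {S : Matrix (Fin n) (Fin n) ℝ}
    (h1 : ∀ i j, 0 ≤ S i j) (h2 : ∀ i, ∑ j, S i j = 1) (x : Fin n → ℂ) :
    ‖(S.map (fun r : ℝ => (r : ℂ))).mulVec x‖ ≤ ‖x‖ := by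
  rw [pi_norm_le_iff_of_nonneg (norm_nonneg x)]
  intro i
  rw [mulVec_apply']
  calc ‖∑ j, (S.map (fun r : ℝ => (r : ℂ))) i j * x j‖
      ≤ ∑ j, ‖(S.map (fun r : ℝ => (r : ℂ))) i j * x j‖ := norm_sum_le _ _
    _ = ∑ j, S i j * ‖x j‖ := by
        refine Finset.sum_congr rfl fun j _ => ?_
        rw [norm_mul]
        simp [Matrix.map_apply, Complex.norm_real, abs_of_nonneg (h1 i j)]
    _ ≤ ∑ j, S i j * ‖x‖ := by
        refine Finset.sum_le_sum fun j _ => ?_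
        exact mul_le_mul_of_nonneg_left (norm_le_pi_norm x j) (h1 i j)
    _ = ‖x‖ := by rw [← Finset.sum_mul, h2 i, one_mul]

lemma unit_eig {P : Matrix (Fin n) (Fin n) ℝ}
    (hpos : ∀ i j, 0 ≤ P i j) (hrow : ∀ i, ∑ j, P i j = 1)
    (hirr : ∀ i j, ∃ m : ℕ, 1 ≤ m ∧ 0 < (P ^ m) i j)
    {μ : ℂ} {x : Fin n → ℂ} (hx : x ≠ 0)
    (he : (P.map (fun r : ℝ => (r : ℂ))).mulVec x = μ • x) (hμ : ‖μ‖ = 1) :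
    (∀ j, x j ≠ 0) ∧ (∀ i j, 0 < P i j → x j = μ * x i) := by
  set u : Fin n → ℝ := fun j => ‖x j‖ with hu
  have h1 : ∀ i, u i ≤ ∑ j, P i j * u j := by
    intro i
    have hcomp : ∑ j, (P i j : ℂ) * x j = μ * x i := by
      have := congrFun he i
      simpa [Matrix.mulVec, dotProduct, Matrix.map_apply] using this
    calc u i = ‖μ * x i‖ := by rw [norm_mul, hμ, one_mul]
      _ = ‖∑ j, (P i j : ℂ) * x j‖ := by rw [hcomp]
      _ ≤ ∑ j, ‖(P i j : ℂ) * x j‖ := norm_sum_le _ _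
      _ = ∑ j, P i j * u j := by
          refine Finset.sum_congr rfl fun j _ => ?_
          rw [norm_mul, Complex.norm_real, Real.norm_eq_abs, abs_of_nonneg (hpos i j)]
  have hsub : ∀ m i, u i ≤ ∑ j, (P ^ m) i j * u j := by
    intro m
    induction m with
    | zero => intro i; simp [Matrix.one_apply]
    | succ m ih =>
      intro i
      refine (h1 i).trans ?_
      have : ∀ j, P i j * u j ≤ P i j * ∑ l, (P ^ m) j l * u l := fun j =>
        mul_le_mul_of_nonneg_left (ih j) (hpos i j)
      refine (Finset.sum_le_sum fun j _ => this j).trans_eq ?_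
      rw [pow_succ']
      simp_rw [Matrix.mul_apply, Finset.sum_mul, Finset.mul_sum]
      rw [Finset.sum_comm]
      refine Finset.sum_congr rfl fun l _ => Finset.sum_congr rfl fun j _ => by ring
  obtain ⟨j₀, hj₀⟩ : ∃ j, x j ≠ 0 := Function.ne_iff.mp hx
  have : Nonempty (Fin n) := ⟨j₀⟩
  obtain ⟨i₀, -, hmax⟩ := Finset.exists_max_image Finset.univ u ⟨j₀, Finset.mem_univ j₀⟩
  have hmax' : ∀ j, u j ≤ u i₀ := fun j => hmax j (Finset.mem_univ j)
  have hconst : ∀ j, u j = u i₀ := by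
    intro j
    obtain ⟨m, -, hm⟩ := hirr i₀ j
    have hsm := (stoch_pow hpos hrow m).2 i₀
    have hnn := (stoch_pow hpos hrow m).1
    have hle : ∑ l, (P ^ m) i₀ l * u l ≤ u i₀ := by
      calc ∑ l, (P ^ m) i₀ l * u l ≤ ∑ l, (P ^ m) i₀ l * u i₀ :=
            Finset.sum_le_sum fun l _ => mul_le_mul_of_nonneg_left (hmax' l) (hnn i₀ l)
        _ = u i₀ := by rw [← Finset.sum_mul, hsm, one_mul]
    have heq : ∑ l, (P ^ m) i₀ l * u l = u i₀ := le_antisymm hle (hsub m i₀)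
    have hzero : ∑ l, (P ^ m) i₀ l * (u i₀ - u l) = 0 := by
      simp_rw [mul_sub]
      rw [Finset.sum_sub_distrib, ← Finset.sum_mul, hsm, one_mul, heq, sub_self]
    have := (Finset.sum_eq_zero_iff_of_nonneg fun l _ =>
      mul_nonneg (hnn i₀ l) (sub_nonneg.mpr (hmax' l))).mp hzero j (Finset.mem_univ j)
    have := mul_eq_zero.mp this
    rcases this with h | h
    · exact absurd h hm.ne'
    · linarith [sub_eq_zero.mp h]
  have hMpos : 0 < u i₀ := by
    have : 0 < u j₀ := norm_pos_iff.mpr hj₀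
    rwa [hconst j₀] at this
  have hne : ∀ j, x j ≠ 0 := fun j => by
    have : 0 < u j := by rw [hconst j]; exact hMpos
    exact norm_pos_iff.mp this
  refine ⟨hne, ?_⟩
  intro i j hPij
  set M := u i₀ with hM
  have hcomp : ∑ l, (P i l : ℂ) * x l = μ * x i := by
    have := congrFun he i
    simpa [Matrix.mulVec, dotProduct, Matrix.map_apply] using this
  set c : ℂ := μ * x i with hc
  have hcnorm : ‖c‖ = M := by rw [hc, norm_mul, hμ, one_mul, ← hconst i]
  have hcne : c ≠ 0 := by
    intro h0; rw [h0] at hcnorm; simp at hcnorm; exact hMpos.ne' hcnorm.symm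
  have hkey : ∑ l, P i l * ((starRingEnd ℂ) c * x l).re = M * M := by
    have : (starRingEnd ℂ) c * (∑ l, (P i l : ℂ) * x l) = (starRingEnd ℂ) c * c := by
      rw [hcomp, hc]
    have h2 : ∑ l, (starRingEnd ℂ) c * ((P i l : ℂ) * x l) = (starRingEnd ℂ) c * c := by
      rw [← Finset.mul_sum]; exact this
    have h3 := congrArg Complex.re h2
    rw [Complex.re_sum] at h3
    have h4 : ∀ l, ((starRingEnd ℂ) c * ((P i l : ℂ) * x l)).re
        = P i l * ((starRingEnd ℂ) c * x l).re := by
      intro l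
      have : (starRingEnd ℂ) c * ((P i l : ℂ) * x l) = (P i l : ℂ) * ((starRingEnd ℂ) c * x l) := by
        ring
      rw [this]
      simp [Complex.mul_re]
    simp_rw [h4] at h3
    rw [h3]
    have : ((starRingEnd ℂ) c * c).re = ‖c‖ ^ 2 := by
      rw [mul_comm, Complex.mul_conj]
      simp [Complex.normSq_eq_norm_sq, sq]
    rw [this, hcnorm]; ring
  have hbound : ∀ l, ((starRingEnd ℂ) c * x l).re ≤ M * M := by
    intro l
    calc ((starRingEnd ℂ) c * x l).re ≤ ‖(starRingEnd ℂ) c * x l‖ := Complex.re_le_norm _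
      _ = ‖c‖ * ‖x l‖ := by rw [norm_mul, RCLike.norm_conj]
      _ = M * M := by rw [hcnorm, ← hconst l]
  have hzero : ∑ l, P i l * (M * M - ((starRingEnd ℂ) c * x l).re) = 0 := by
    simp_rw [mul_sub]
    rw [Finset.sum_sub_distrib, hkey, ← Finset.sum_mul, hrow i, one_mul, sub_self]
  have hj := (Finset.sum_eq_zero_iff_of_nonneg fun l _ =>
    mul_nonneg (hpos i l) (sub_nonneg.mpr (hbound l))).mp hzero j (Finset.mem_univ j)
  have hre : ((starRingEnd ℂ) c * x j).re = M * M := by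
    rcases mul_eq_zero.mp hj with h | h
    · exact absurd h hPij.ne'
    · linarith [sub_eq_zero.mp h]
  have hznorm : ‖(starRingEnd ℂ) c * x j‖ = M * M := by
    rw [norm_mul, RCLike.norm_conj, hcnorm, ← hconst j]
  have hzeq : (starRingEnd ℂ) c * x j = ((M * M : ℝ) : ℂ) := by
    have := re_eq_norm (z := (starRingEnd ℂ) c * x j) (by rw [hre, hznorm])
    rwa [hznorm] at this
  have hcc : (starRingEnd ℂ) c * c = ((M * M : ℝ) : ℂ) := by
    rw [mul_comm, Complex.mul_conj]
    norm_cast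
    rw [Complex.normSq_eq_norm_sq, hcnorm]; ring
  have : (starRingEnd ℂ) c * x j = (starRingEnd ℂ) c * c := by rw [hzeq, hcc]
  have hconjne : (starRingEnd ℂ) c ≠ 0 := by simpa using hcne
  exact mul_left_cancel₀ hconjne this

lemma pow_align {P : Matrix (Fin n) (Fin n) ℝ}
    (hpos : ∀ i j, 0 ≤ P i j) (hrow : ∀ i, ∑ j, P i j = 1)
    {μ : ℂ} {x : Fin n → ℂ}
    (halign : ∀ i j, 0 < P i j → x j = μ * x i) :
    ∀ m i j, 0 < (P ^ m) i j → x j = μ ^ m * x i := by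
  intro m
  induction m with
  | zero =>
    intro i j h
    have : i = j := by
      by_contra hij
      simp [Matrix.one_apply, hij] at h
    subst this; simp
  | succ m ih =>
    intro i j h
    rw [pow_succ'] at h
    rw [Matrix.mul_apply] at h
    obtain ⟨l, -, hl⟩ := Finset.exists_ne_zero_of_sum_ne_zero h.ne'
    have hnn := (stoch_pow hpos hrow m).1
    have h1 : 0 < P i l := lt_of_le_of_ne (hpos i l) (fun hh => hl (by rw [← hh]; ring))
    have h2 : 0 < (P ^ m) l j :=
      lt_of_le_of_ne (hnn l j) (fun hh => hl (by rw [← hh]; ring))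
    have := ih l j h2
    rw [this, halign i l h1]; ring

lemma charpoly_root_iff (M : Matrix (Fin n) (Fin n) ℂ) (t : ℂ) :
    M.charpoly.IsRoot t ↔ ∃ x, x ≠ 0 ∧ M.mulVec x = t • x := by
  have h1 : M.charpoly.eval t = (Matrix.scalar (Fin n) t - M).det := by
    rw [Matrix.charpoly, eval_det, Matrix.matPolyEquiv_charmatrix]
    rw [Polynomial.eval_sub, Polynomial.eval_X, Polynomial.eval_C]
  have h2 : (Matrix.scalar (Fin n) t - M).det = 0 ↔
      ∃ x, x ≠ 0 ∧ (Matrix.scalar (Fin n) t - M).mulVec x = 0 := by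
    rw [← Matrix.exists_mulVec_eq_zero_iff]
  constructor
  · intro h
    obtain ⟨x, hx, hx2⟩ := h2.mp (by rwa [Polynomial.IsRoot, h1] at h)
    refine ⟨x, hx, ?_⟩
    have : Matrix.scalar (Fin n) t = t • (1 : Matrix (Fin n) (Fin n) ℂ) := by
      rw [Matrix.scalar_apply, ← Matrix.smul_one_eq_diagonal]
    rw [this, Matrix.sub_mulVec, Matrix.smul_mulVec, Matrix.one_mulVec,
      sub_eq_zero] at hx2
    exact hx2.symm
  · rintro ⟨x, hx, hx2⟩
    rw [Polynomial.IsRoot, h1]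
    refine h2.mpr ⟨x, hx, ?_⟩
    have : Matrix.scalar (Fin n) t = t • (1 : Matrix (Fin n) (Fin n) ℂ) := by
      rw [Matrix.scalar_apply, ← Matrix.smul_one_eq_diagonal]
    rw [this, Matrix.sub_mulVec, Matrix.smul_mulVec, Matrix.one_mulVec, hx2, sub_self]

lemma mulVecLin_pow (M : Matrix (Fin n) (Fin n) ℂ) (m : ℕ) :
    M.mulVecLin ^ m = (M ^ m).mulVecLin := by
  induction m with
  | zero => simp only [pow_zero, Matrix.mulVecLin_one]; rfl
  | succ m ih =>
    rw [pow_succ, pow_succ, Matrix.mulVecLin_mul, ih]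
    rfl

lemma contract_pow {P : Matrix (Fin n) (Fin n) ℝ}
    (hpos : ∀ i j, 0 ≤ P i j) (hrow : ∀ i, ∑ j, P i j = 1) (m : ℕ) (v : Fin n → ℂ) :
    ‖((P.map (fun r : ℝ => (r : ℂ))).mulVecLin ^ m) v‖ ≤ ‖v‖ := by
  rw [mulVecLin_pow, ← map_pow', Matrix.mulVecLin_apply]
  exact mulVec_contract (stoch_pow hpos hrow m).1 (stoch_pow hpos hrow m).2 v

lemma semisimple_unit {P : Matrix (Fin n) (Fin n) ℝ}
    (hpos : ∀ i j, 0 ≤ P i j) (hrow : ∀ i, ∑ j, P i j = 1)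
    {μ : ℂ} (hμ : ‖μ‖ = 1) :
    ∀ (d : ℕ) (v : Fin n → ℂ),
      (((P.map (fun r : ℝ => (r : ℂ))).mulVecLin - μ • 1) ^ d) v = 0 →
      (P.map (fun r : ℝ => (r : ℂ))).mulVecLin v = μ • v := by
  set f := (P.map (fun r : ℝ => (r : ℂ))).mulVecLin with hf
  intro d
  induction d with
  | zero =>
    intro v hv
    simp only [pow_zero] at hv
    have : v = 0 := hv
    rw [this]; simp
  | succ d ih =>
    intro v hv
    set u : Fin n → ℂ := (f - μ • 1) v with hu
    have hud : ((f - μ • 1) ^ d) u = 0 := by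
      rw [hu, ← Module.End.mul_apply, ← pow_succ]
      exact hv
    have hu_eig : f u = μ • u := ih u hud
    have hfv : f v = μ • v + u := by
      rw [hu]; simp [LinearMap.sub_apply, LinearMap.smul_apply, Module.End.one_apply]
    have hform : ∀ m : ℕ, (f ^ (m + 1)) v = μ ^ (m + 1) • v + ((m + 1 : ℕ) : ℂ) • μ ^ m • u := by
      intro m
      induction m with
      | zero => simpa using hfv
      | succ m ihm =>
        have : (f ^ (m + 1 + 1)) v = f ((f ^ (m + 1)) v) := by
          rw [← Module.End.mul_apply, ← pow_succ']
        rw [this, ihm]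
        rw [map_add, LinearMap.map_smul, LinearMap.map_smul, LinearMap.map_smul, hfv, hu_eig]
        push_cast
        module
    have hbound : ∀ m : ℕ, ((m + 1 : ℕ) : ℝ) * ‖u‖ ≤ 2 * ‖v‖ := by
      intro m
      have h1 : ‖(f ^ (m + 1)) v‖ ≤ ‖v‖ := contract_pow hpos hrow (m + 1) v
      have h2 : ((m + 1 : ℕ) : ℂ) • μ ^ m • u = (f ^ (m + 1)) v - μ ^ (m + 1) • v := by
        rw [hform m]; abel
      have h3 : ‖((m + 1 : ℕ) : ℂ) • μ ^ m • u‖ ≤ ‖v‖ + ‖v‖ := by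
        rw [h2]
        refine (norm_sub_le _ _).trans ?_
        gcongr
        rw [norm_smul, norm_pow, hμ, one_pow, one_mul]
      rw [norm_smul, norm_smul, norm_pow, hμ, one_pow, one_mul] at h3
      simp only [Complex.norm_natCast] at h3
      linarith
    have hu0 : u = 0 := by
      by_contra hne
      have hpos' : 0 < ‖u‖ := norm_pos_iff.mpr hne
      obtain ⟨m, hm⟩ := exists_nat_gt (2 * ‖v‖ / ‖u‖)
      have h4 : 2 * ‖v‖ < ((m + 1 : ℕ) : ℝ) * ‖u‖ := by
        rw [div_lt_iff₀ hpos'] at hm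
        have : (m : ℝ) ≤ ((m + 1 : ℕ) : ℝ) := by push_cast; linarith
        nlinarith
      linarith [hbound m]
    rw [hfv, hu0, add_zero]

lemma rank_idem_trace {F : Type} [Field F] (M : Matrix (Fin n) (Fin n) F)
    (h : M * M = M) : (M.rank : F) = M.trace := by
  set f := M.mulVecLin with hf
  have hff : ∀ x, f (f x) = f x := by
    intro x
    rw [← LinearMap.comp_apply, ← Matrix.mulVecLin_mul, h]
  have hproj : LinearMap.IsProj (LinearMap.range f) f :=
    ⟨fun x => LinearMap.mem_range_self f x, fun x hx => by
      obtain ⟨y, rfl⟩ := hx; exact hff y⟩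
  have htr := LinearMap.IsProj.trace hproj
  have htr2 : LinearMap.trace F (Fin n → F) f = M.trace := by
    rw [LinearMap.trace_eq_matrix_trace F (Pi.basisFun F (Fin n)) f]
    congr 1
    rw [LinearMap.toMatrix_eq_toMatrix']
    rw [hf, ← Matrix.toLin'_apply', LinearMap.toMatrix'_toLin']
  rw [← htr2, htr]
  rfl

lemma pow_tendsto_zero {V : Type} [NormedAddCommGroup V] [NormedSpace ℂ V]
    (g : V →ₗ[ℂ] V) {μ : ℂ} (hμ : ‖μ‖ < 1) {d : ℕ} {v : V}
    (hd : ((g - μ • 1) ^ d) v = 0) :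
    Tendsto (fun N : ℕ => (g ^ N) v) atTop (nhds 0) := by
  by_cases hμ0 : μ = 0
  · subst hμ0
    simp only [smul_zero, zero_smul, sub_zero] at hd
    rw [tendsto_congr' (f₂ := fun _ : ℕ => (0 : V))]
    · exact tendsto_const_nhds
    · filter_upwards [eventually_ge_atTop d] with N hN
      have hgN : g ^ N = g ^ (N - d) * g ^ d := by rw [← pow_add, Nat.sub_add_cancel hN]
      rw [hgN, Module.End.mul_apply, hd, map_zero]
  · set B : V →ₗ[ℂ] V := g - μ • 1 with hB
    have hr0 : (0 : ℝ) < ‖μ‖ := norm_pos_iff.mpr hμ0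
    have hcomm : Commute B (μ • (1 : V →ₗ[ℂ] V)) := (Commute.one_right B).smul_right μ
    have hsum : ∀ N : ℕ, (g ^ N) v
        = ∑ j ∈ Finset.range (N + 1), (N.choose j : ℂ) • μ ^ (N - j) • ((B ^ j) v) := by
      intro N
      have hBg : B + μ • (1 : V →ₗ[ℂ] V) = g := by rw [hB]; abel
      have hap := Commute.add_pow hcomm N
      rw [hBg] at hap
      rw [hap, LinearMap.sum_apply]
      refine Finset.sum_congr rfl fun j hj => ?_
      rw [Module.End.mul_apply, Module.End.mul_apply]
      rw [Module.End.natCast_apply]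
      simp only [_root_.smul_pow, one_pow, LinearMap.smul_apply, Module.End.one_apply]
      rw [LinearMap.map_smul, map_nsmul, ← Nat.cast_smul_eq_nsmul ℂ, smul_comm]
    have hvanish : ∀ j, d ≤ j → (B ^ j) v = 0 := by
      intro j hj
      have : B ^ j = B ^ (j - d) * B ^ d := by rw [← pow_add, Nat.sub_add_cancel hj]
      rw [this, Module.End.mul_apply, hd, map_zero]
    have hsum' : ∀ᶠ N : ℕ in atTop, (g ^ N) v
        = ∑ j ∈ Finset.range d, (N.choose j : ℂ) • μ ^ (N - j) • ((B ^ j) v) := by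
      filter_upwards [eventually_ge_atTop d] with N hN
      rw [hsum N]
      refine (Finset.sum_subset (Finset.range_subset_range.mpr (by omega)) ?_).symm
      intro j hj1 hj2
      rw [Finset.mem_range] at hj1 hj2
      rw [hvanish j (by omega), smul_zero, smul_zero]
    rw [tendsto_congr' hsum']
    have : (0 : V) = ∑ j ∈ Finset.range d, (0 : V) := by simp
    rw [this]
    refine tendsto_finset_sum _ fun j hj => ?_
    have hsummable := summable_pow_mul_geometric_of_norm_lt_one (R := ℝ) j
      (r := ‖μ‖) (by rwa [Real.norm_eq_abs, abs_of_nonneg hr0.le])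
    have htz := hsummable.tendsto_atTop_zero
    have hbound := htz.mul_const (‖(B ^ j) v‖ / ‖μ‖ ^ j)
    rw [zero_mul] at hbound
    refine squeeze_zero_norm' ?_ hbound
    filter_upwards [eventually_ge_atTop j] with N hN
    rw [norm_smul, norm_smul, norm_pow]
    have h1 : ‖((N.choose j : ℂ))‖ = (N.choose j : ℝ) := by simp
    rw [h1]
    have h2 : (N.choose j : ℝ) ≤ (N : ℝ) ^ j := by
      exact_mod_cast Nat.choose_le_pow N j
    have h3 : ‖μ‖ ^ (N - j) = ‖μ‖ ^ N / ‖μ‖ ^ j := by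
      rw [pow_sub₀ _ hr0.ne' hN, div_eq_mul_inv]
    rw [h3]
    calc (N.choose j : ℝ) * (‖μ‖ ^ N / ‖μ‖ ^ j * ‖(B ^ j) v‖)
        ≤ (N : ℝ) ^ j * (‖μ‖ ^ N / ‖μ‖ ^ j * ‖(B ^ j) v‖) := by
          refine mul_le_mul_of_nonneg_right h2 ?_
          positivity
      _ = (N : ℝ) ^ j * ‖μ‖ ^ N * (‖(B ^ j) v‖ / ‖μ‖ ^ j) := by ring

end Stmt13

open Stmt13 in
/-- Let `P` be an irreducible `n × n` stochastic matrix and `k` the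
number of complex eigenvalues of `P` of modulus one.  Then the powers
`P^k, P^{2k}, P^{3k}, …` converge entrywise to a matrix `Q` with `Q² = Q`, `PQ = QP`,
`Q` stochastic, and `rank Q = k`.  Moreover, regarding the matrices as linear operators
on `ℂⁿ` with the supremum norm, `lim_{r → ∞} ‖ρ ∘ P^r‖ = ‖ρ ∘ Q‖` for every linear
functional `ρ` on `ℂⁿ`. -/
theorem stmt13 {n : ℕ} (P : Matrix (Fin n) (Fin n) ℝ)
    (hpos : ∀ i j, 0 ≤ P i j)
    (hrow : ∀ i, ∑ j, P i j = 1)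
    (hirr : ∀ i j, ∃ m : ℕ, 1 ≤ m ∧ 0 < (P ^ m) i j)
    (k : ℕ)
    (hk : k = Set.ncard {lam : ℂ | ‖lam‖ = 1 ∧
      (P.map (fun r : ℝ => (r : ℂ))).charpoly.IsRoot lam}) :
    ∃ Q : Matrix (Fin n) (Fin n) ℝ,
      (∀ i j, Filter.Tendsto (fun m : ℕ => (P ^ (k * (m + 1))) i j)
        Filter.atTop (nhds (Q i j))) ∧
      Q * Q = Q ∧
      P * Q = Q * P ∧
      (∀ i j, 0 ≤ Q i j) ∧ (∀ i, ∑ j, Q i j = 1) ∧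
      Q.rank = k ∧
      (∀ ρ : (Fin n → ℂ) →L[ℂ] ℂ,
        Filter.Tendsto
          (fun r : ℕ =>
            ‖ρ.comp (LinearMap.toContinuousLinearMap
              (((P ^ r).map (fun t : ℝ => (t : ℂ))).mulVecLin))‖)
          Filter.atTop
          (nhds ‖ρ.comp (LinearMap.toContinuousLinearMap
            ((Q.map (fun t : ℝ => (t : ℂ))).mulVecLin))‖)) := by
  classical
  rcases Nat.eq_zero_or_pos n with hn | hn
  · subst hn
    have hk0 : k = 0 := by
      rw [hk]
      convert Set.ncard_empty ℂ using 2
      ext lam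
      simp only [Set.mem_setOf_eq, Set.mem_empty_iff_false, iff_false, not_and]
      intro _
      have hcp : (P.map (fun r : ℝ => (r : ℂ))).charpoly = 1 := by
        rw [Matrix.charpoly, Matrix.det_fin_zero]
      rw [hcp]
      simp [Polynomial.IsRoot]
    refine ⟨1, fun i => i.elim0, by rw [one_mul], by rw [mul_one, one_mul],
      fun i => i.elim0, fun i => i.elim0, ?_, ?_⟩
    · rw [hk0]
      exact Nat.le_zero.mp ((Matrix.rank_le_card_width 1).trans (by simp))
    · intro ρ
      have hzero : ∀ (l : (Fin 0 → ℂ) →ₗ[ℂ] (Fin 0 → ℂ)),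
          ρ.comp (LinearMap.toContinuousLinearMap l) = 0 := by
        intro l; ext v
        have hv : l v = 0 := Subsingleton.elim _ _
        rw [ContinuousLinearMap.comp_apply, ContinuousLinearMap.zero_apply]
        show ρ (l v) = 0
        rw [hv, map_zero]
      simp only [hzero]
      exact tendsto_const_nhds
  · -- main case : n ≥ 1
    have hnemp : Nonempty (Fin n) := Fin.pos_iff_nonempty.mp hn
    set Pc : Matrix (Fin n) (Fin n) ℂ := P.map (fun r : ℝ => (r : ℂ)) with hPc
    set f : Module.End ℂ (Fin n → ℂ) := Pc.mulVecLin with hfdef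
    set G : Set ℂ := {lam : ℂ | ‖lam‖ = 1 ∧ Pc.charpoly.IsRoot lam} with hGdef
    have hkG : k = G.ncard := hk
    have hPcapp : ∀ i j, Pc i j = ((P i j : ℝ) : ℂ) := fun i j => rfl
    have hsum1C : ∀ i, ∑ j, ((P i j : ℝ) : ℂ) = 1 := by
      intro i; exact_mod_cast congrArg (fun r : ℝ => (r : ℂ)) (hrow i)
    have hGiff : ∀ μ : ℂ, μ ∈ G ↔ ‖μ‖ = 1 ∧ ∃ x, x ≠ 0 ∧ Pc.mulVec x = μ • x := by
      intro μ
      rw [hGdef, Set.mem_setOf_eq, charpoly_root_iff]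
    have hone : (1 : ℂ) ∈ G := by
      rw [hGiff]
      refine ⟨norm_one, fun _ => 1, ?_, ?_⟩
      · intro h0
        have := congrFun h0 (Classical.arbitrary (Fin n))
        simp at this
      · funext i
        show ∑ j, Pc i j * 1 = _
        simp only [hPcapp, mul_one, Pi.smul_apply, smul_eq_mul, one_mul]
        exact hsum1C i
    have hGfin : G.Finite := by
      refine Set.Finite.subset (Polynomial.finite_setOf_isRoot
        (Polynomial.Monic.ne_zero (Matrix.charpoly_monic Pc))) ?_
      intro μ hμ
      exact hμ.2
    have hGfcard : hGfin.toFinset.card = k := by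
      rw [hkG, Set.ncard_eq_toFinset_card G hGfin]
    have hk1 : 1 ≤ k := by
      rw [← hGfcard]
      refine Finset.card_pos.mpr ⟨1, ?_⟩
      rw [Set.Finite.mem_toFinset]
      exact hone
    have htendk : Tendsto (fun m : ℕ => k * (m + 1)) atTop atTop := by
      refine tendsto_atTop_mono (fun m => ?_) tendsto_id
      calc (m : ℕ) ≤ m + 1 := Nat.le_succ m
        _ ≤ k * (m + 1) := Nat.le_mul_of_pos_left _ hk1
    have heig_le : ∀ (μ : ℂ) (x : Fin n → ℂ), x ≠ 0 → Pc.mulVec x = μ • x → ‖μ‖ ≤ 1 := by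
      intro μ x hx0 hx
      have h1 : ‖Pc.mulVec x‖ ≤ ‖x‖ := mulVec_contract hpos hrow x
      rw [hx, norm_smul] at h1
      have h2 : 0 < ‖x‖ := norm_pos_iff.mpr hx0
      calc ‖μ‖ = ‖μ‖ * ‖x‖ / ‖x‖ := by field_simp
        _ ≤ ‖x‖ / ‖x‖ := by gcongr
        _ = 1 := by field_simp
    have hmulG : ∀ μ ∈ G, ∀ ν ∈ G, μ * ν ∈ G := by
      intro μ hμ ν hν
      obtain ⟨hμ1, x, hx0, hx⟩ := (hGiff μ).mp hμ
      obtain ⟨hν1, y, hy0, hy⟩ := (hGiff ν).mp hν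
      have hxW := unit_eig hpos hrow hirr hx0 hx hμ1
      have hyW := unit_eig hpos hrow hirr hy0 hy hν1
      rw [hGiff]
      refine ⟨by rw [norm_mul, hμ1, hν1, one_mul], fun j => x j * y j, ?_, ?_⟩
      · intro h0
        have := congrFun h0 (Classical.arbitrary (Fin n))
        exact mul_ne_zero (hxW.1 _) (hyW.1 _) this
      · funext i
        show ∑ j, Pc i j * (x j * y j) = _
        have hterm : ∀ j, Pc i j * (x j * y j) = Pc i j * ((μ * ν) * (x i * y i)) := by
          intro j
          rcases lt_or_eq_of_le (hpos i j) with h | h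
          · rw [hxW.2 i j h, hyW.2 i j h]; ring
          · rw [hPcapp, ← h, Complex.ofReal_zero, zero_mul, zero_mul]
        rw [Finset.sum_congr rfl fun j _ => hterm j, ← Finset.sum_mul]
        simp only [hPcapp]
        rw [hsum1C i, one_mul]
        simp [Pi.smul_apply, smul_eq_mul]
    have hGpow : ∀ μ ∈ G, μ ^ k = 1 := by
      intro μ hμ
      have hμne : μ ≠ 0 := by
        intro h0
        have := ((hGiff μ).mp hμ).1
        rw [h0] at this; simp at this
      have hinj : Function.Injective (fun ν : ℂ => μ * ν) := fun a b hab => by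
        simpa [hμne] using hab
      have himg : hGfin.toFinset.image (fun ν => μ * ν) = hGfin.toFinset := by
        refine Finset.eq_of_subset_of_card_le ?_ ?_
        · intro ν hν
          obtain ⟨τ, hτ, rfl⟩ := Finset.mem_image.mp hν
          rw [Set.Finite.mem_toFinset] at hτ ⊢
          exact hmulG μ hμ τ hτ
        · rw [Finset.card_image_of_injective _ hinj]
      have hprod : ∏ ν ∈ hGfin.toFinset, (μ * ν) = ∏ ν ∈ hGfin.toFinset, ν := by
        conv_rhs => rw [← himg]
        rw [Finset.prod_image (fun a _ b _ hab => hinj hab)]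
      rw [Finset.prod_mul_distrib, Finset.prod_const, hGfcard] at hprod
      have hprodne : ∏ ν ∈ hGfin.toFinset, ν ≠ 0 := by
        refine Finset.prod_ne_zero_iff.mpr fun ν hν => ?_
        rw [Set.Finite.mem_toFinset] at hν
        intro h0
        have := ((hGiff ν).mp hν).1
        rw [h0] at this; simp at this
      have h5 : μ ^ k * ∏ ν ∈ hGfin.toFinset, ν = 1 * ∏ ν ∈ hGfin.toFinset, ν := by
        rw [hprod, one_mul]
      exact mul_right_cancel₀ hprodne h5
    -- the dichotomy on generalized eigenspaces
    have hcase : ∀ (μ : ℂ) (v : Fin n → ℂ), v ∈ f.maxGenEigenspace μ →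
        (μ ∈ G ∧ f v = μ • v) ∨ Tendsto (fun N : ℕ => (f ^ N) v) atTop (nhds 0) := by
      intro μ v hv
      by_cases hv0 : v = 0
      · right
        subst hv0
        simp only [map_zero]
        exact tendsto_const_nhds
      obtain ⟨d, hd⟩ := (Module.End.mem_maxGenEigenspace f μ v).mp hv
      have heigval : ∃ x, x ≠ 0 ∧ Pc.mulVec x = μ • x := by
        have h1 : f.HasGenEigenvalue μ d := by
          refine Submodule.ne_bot_iff _ |>.mpr ⟨v, ?_, hv0⟩
          exact (Module.End.mem_genEigenspace_nat).mpr hd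
        have h2 : f.HasEigenvalue μ := Module.End.hasEigenvalue_of_hasGenEigenvalue h1
        obtain ⟨x, hx, hx0⟩ := Submodule.exists_mem_ne_zero_of_ne_bot h2
        exact ⟨x, hx0, Module.End.mem_eigenspace_iff.mp hx⟩
      obtain ⟨x, hx0, hx⟩ := heigval
      have hμle : ‖μ‖ ≤ 1 := heig_le μ x hx0 hx
      rcases lt_or_eq_of_le hμle with hlt | heq
      · right
        exact pow_tendsto_zero f hlt hd
      · left
        refine ⟨(hGiff μ).mpr ⟨heq, x, hx0, hx⟩, ?_⟩
        exact semisimple_unit hpos hrow heq d v hd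
    have hpow_eig : ∀ (μ : ℂ) (v : Fin n → ℂ), f v = μ • v → ∀ N, (f ^ N) v = μ ^ N • v := by
      intro μ v hfv N
      induction N with
      | zero => simp
      | succ N ih =>
        have : (f ^ (N + 1)) v = f ((f ^ N) v) := by
          rw [← Module.End.mul_apply, ← pow_succ']
        rw [this, ih, LinearMap.map_smul, hfv, smul_smul, pow_succ]
    have hconst_lim : ∀ (μ : ℂ) (v : Fin n → ℂ), μ ∈ G → f v = μ • v →
        (fun m : ℕ => (f ^ (k * (m + 1))) v) = fun _ : ℕ => v := by
      intro μ v hμG hfv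
      funext m
      rw [hpow_eig μ v hfv, pow_mul, hGpow μ hμG, one_pow, one_smul]
    have htop := Module.End.iSup_maxGenEigenspace_eq_top f
    -- the space of vectors whose iterates converge
    set S : Submodule ℂ (Fin n → ℂ) :=
      { carrier := {v | ∃ w, Tendsto (fun m : ℕ => (f ^ (k * (m + 1))) v) atTop (nhds w)}
        add_mem' := by
          rintro a b ⟨wa, ha⟩ ⟨wb, hb⟩
          exact ⟨wa + wb, by simpa only [map_add] using ha.add hb⟩
        zero_mem' := ⟨0, by simpa only [map_zero] using tendsto_const_nhds⟩
        smul_mem' := by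
          rintro c a ⟨w, hw⟩
          exact ⟨c • w, by simpa only [LinearMap.map_smul] using hw.const_smul c⟩ } with hSdef
    have hSle : ∀ μ : ℂ, f.maxGenEigenspace μ ≤ S := by
      intro μ v hv
      rcases hcase μ v hv with ⟨hμG, hfv⟩ | h0
      · refine ⟨v, ?_⟩
        rw [hconst_lim μ v hμG hfv]
        exact tendsto_const_nhds
      · exact ⟨0, h0.comp htendk⟩
    have hS : ∀ v : Fin n → ℂ, ∃ w, Tendsto (fun m : ℕ => (f ^ (k * (m + 1))) v) atTop (nhds w) := by
      intro v
      have hle : (⊤ : Submodule ℂ (Fin n → ℂ)) ≤ S := htop ▸ iSup_le hSle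
      exact hle Submodule.mem_top
    have hfpow : ∀ N : ℕ, f ^ N = ((P ^ N).map (fun r : ℝ => (r : ℂ))).mulVecLin := by
      intro N
      rw [hfdef, mulVecLin_pow, ← map_pow']
    -- the limit matrix
    set W : Matrix (Fin n) (Fin n) ℂ :=
      Matrix.of (fun i j => Classical.choose (hS (Pi.single j 1)) i) with hWdef
    have hWentry : ∀ i j, Tendsto (fun m : ℕ => ((P ^ (k * (m + 1))) i j : ℂ))
        atTop (nhds (W i j)) := by
      intro i j
      have hspec := Classical.choose_spec (hS (Pi.single j 1))
      have hcomp : ∀ N : ℕ, (f ^ N) (Pi.single j 1) i = ((P ^ N) i j : ℂ) := by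
        intro N
        rw [hfpow N, Matrix.mulVecLin_apply, Matrix.mulVec_single]
        simp [Matrix.map_apply]
      have := (tendsto_pi_nhds.mp hspec) i
      simp only [hcomp] at this
      exact this
    set Q : Matrix (Fin n) (Fin n) ℝ := Matrix.of (fun i j => (W i j).re) with hQdef
    have hQtend : ∀ i j, Tendsto (fun m : ℕ => (P ^ (k * (m + 1))) i j)
        atTop (nhds (Q i j)) := by
      intro i j
      have := (Complex.continuous_re.tendsto (W i j)).comp (hWentry i j)
      simpa [Function.comp_def, hQdef] using this
    have hWQ : W = Q.map (fun r : ℝ => (r : ℂ)) := by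
      have him : ∀ i j, (W i j).im = 0 := by
        intro i j
        have h1 : Tendsto (fun m : ℕ => ((P ^ (k * (m + 1))) i j : ℂ).im)
            atTop (nhds (W i j).im) :=
          (Complex.continuous_im.tendsto (W i j)).comp (hWentry i j)
        simp only [Complex.ofReal_im] at h1
        exact (tendsto_nhds_unique tendsto_const_nhds h1).symm
      ext i j
      rw [Matrix.map_apply, hQdef]
      exact Complex.ext rfl (by simpa using him i j)
    have hWmulVec : ∀ v : Fin n → ℂ,
        Tendsto (fun m : ℕ => (f ^ (k * (m + 1))) v) atTop (nhds (W.mulVec v)) := by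
      intro v
      rw [tendsto_pi_nhds]
      intro i
      have hterm : ∀ N : ℕ, (f ^ N) v i = ∑ j, ((P ^ N) i j : ℂ) * v j := by
        intro N
        rw [hfpow N, Matrix.mulVecLin_apply, mulVec_apply']
        simp [Matrix.map_apply]
      simp only [hterm]
      have : Tendsto (fun m : ℕ => ∑ j, ((P ^ (k * (m + 1))) i j : ℂ) * v j)
          atTop (nhds (∑ j, W i j * v j)) := by
        refine tendsto_finset_sum _ fun j _ => ?_
        exact (hWentry i j).mul_const (v j)
      simpa [mulVec_apply'] using this
    -- subsequence trick for Q * Q = Q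
    have hQQ : Q * Q = Q := by
      ext i j
      have h1 : Tendsto (fun m : ℕ => ∑ l, (P ^ (k * (m + 1))) i l * (P ^ (k * (m + 1))) l j)
          atTop (nhds (∑ l, Q i l * Q l j)) :=
        tendsto_finset_sum _ fun l _ => (hQtend i l).mul (hQtend l j)
      have h2 : ∀ m : ℕ, ∑ l, (P ^ (k * (m + 1))) i l * (P ^ (k * (m + 1))) l j
          = (P ^ (k * (2 * m + 1 + 1))) i j := by
        intro m
        rw [← Matrix.mul_apply, ← pow_add]
        congr 2
        ring
      simp only [h2] at h1
      have h3 : Tendsto (fun m : ℕ => (P ^ (k * (2 * m + 1 + 1))) i j)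
          atTop (nhds (Q i j)) := by
        have hmono : Tendsto (fun m : ℕ => 2 * m + 1) atTop atTop :=
          tendsto_atTop_mono (fun m => by simp only [id_eq]; omega) tendsto_id
        exact (hQtend i j).comp hmono
      have := tendsto_nhds_unique h1 h3
      simpa [Matrix.mul_apply] using this
    have hPQ : P * Q = Q * P := by
      ext i j
      have h1 : Tendsto (fun m : ℕ => ∑ l, P i l * (P ^ (k * (m + 1))) l j)
          atTop (nhds (∑ l, P i l * Q l j)) :=
        tendsto_finset_sum _ fun l _ => (hQtend l j).const_mul (P i l)
      have h2 : Tendsto (fun m : ℕ => ∑ l, (P ^ (k * (m + 1))) i l * P l j)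
          atTop (nhds (∑ l, Q i l * P l j)) :=
        tendsto_finset_sum _ fun l _ => (hQtend i l).mul_const (P l j)
      have h3 : ∀ m : ℕ, ∑ l, P i l * (P ^ (k * (m + 1))) l j
          = ∑ l, (P ^ (k * (m + 1))) i l * P l j := by
        intro m
        rw [← Matrix.mul_apply, ← Matrix.mul_apply]
        rw [← pow_succ', ← pow_succ]
      simp only [h3] at h1
      have := tendsto_nhds_unique h1 h2
      simpa [Matrix.mul_apply] using this
    have hQpos : ∀ i j, 0 ≤ Q i j := by
      intro i j
      exact ge_of_tendsto' (hQtend i j) fun m => (stoch_pow hpos hrow (k * (m + 1))).1 i j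
    have hQrow : ∀ i, ∑ j, Q i j = 1 := by
      intro i
      have h1 : Tendsto (fun m : ℕ => ∑ j, (P ^ (k * (m + 1))) i j)
          atTop (nhds (∑ j, Q i j)) := tendsto_finset_sum _ fun j _ => hQtend i j
      have h2 : ∀ m : ℕ, ∑ j, (P ^ (k * (m + 1))) i j = 1 := fun m =>
        (stoch_pow hpos hrow (k * (m + 1))).2 i
      simp only [h2] at h1
      exact tendsto_nhds_unique h1 tendsto_const_nhds
    -- rank computation
    set E : Submodule ℂ (Fin n → ℂ) := ⨆ μ ∈ G, f.eigenspace μ with hEdef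
    have hWfix : ∀ μ ∈ G, ∀ v ∈ f.eigenspace μ, W.mulVec v = v := by
      intro μ hμ v hv
      have hfv : f v = μ • v := Module.End.mem_eigenspace_iff.mp hv
      have h1 := hWmulVec v
      rw [hconst_lim μ v hμ hfv] at h1
      exact tendsto_nhds_unique h1 tendsto_const_nhds
    have hWdicho : ∀ μ : ℂ, ∀ v ∈ f.maxGenEigenspace μ, W.mulVec v ∈ E := by
      intro μ v hv
      rcases hcase μ v hv with ⟨hμG, hfv⟩ | h0
      · have hvE : v ∈ E := by
          have hmem : v ∈ f.eigenspace μ := Module.End.mem_eigenspace_iff.mpr hfv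
          exact (le_iSup₂ (f := fun (ν : ℂ) (_ : ν ∈ G) => f.eigenspace ν) μ hμG) hmem
        rw [hWfix μ hμG v (Module.End.mem_eigenspace_iff.mpr hfv)]
        exact hvE
      · have : W.mulVec v = 0 :=
          tendsto_nhds_unique (hWmulVec v) (h0.comp htendk)
        rw [this]
        exact Submodule.zero_mem E
    have hrangeE : LinearMap.range W.mulVecLin = E := by
      apply le_antisymm
      · rintro _ ⟨v, rfl⟩
        have hC : ∀ μ : ℂ, f.maxGenEigenspace μ ≤ Submodule.comap W.mulVecLin E :=
          fun μ v hv => hWdicho μ v hv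
        have hle : (⊤ : Submodule ℂ (Fin n → ℂ)) ≤ Submodule.comap W.mulVecLin E :=
          htop ▸ iSup_le hC
        exact hle Submodule.mem_top
      · refine iSup₂_le fun μ hμ => fun v hv => ?_
        exact ⟨v, hWfix μ hμ v hv⟩
    haveI : Fintype ↥G := hGfin.fintype
    have hxvex : ∀ μ : ↥G, ∃ x, x ≠ 0 ∧ Pc.mulVec x = (μ : ℂ) • x := fun μ =>
      ((hGiff μ).mp μ.2).2
    choose xv hxv0 hxveig using hxvex
    have hLI : LinearIndependent ℂ xv := by
      refine Module.End.eigenvectors_linearIndependent' f (fun μ : ↥G => (μ : ℂ))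
        Subtype.coe_injective xv fun μ => ⟨?_, hxv0 μ⟩
      exact Module.End.mem_eigenspace_iff.mpr (hxveig μ)
    have hspan : E = Submodule.span ℂ (Set.range xv) := by
      apply le_antisymm
      · refine iSup₂_le fun μ hμ => fun v hv => ?_
        by_cases hv0 : v = 0
        · rw [hv0]; exact Submodule.zero_mem _
        have hfv : Pc.mulVec v = μ • v := Module.End.mem_eigenspace_iff.mp hv
        have hμ1 : ‖μ‖ = 1 := ((hGiff μ).mp hμ).1
        have hvW := unit_eig hpos hrow hirr hv0 hfv hμ1
        have hxW := unit_eig hpos hrow hirr (hxv0 ⟨μ, hμ⟩) (hxveig ⟨μ, hμ⟩) hμ1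
        have hvalign := pow_align hpos hrow hvW.2
        have hxalign := pow_align hpos hrow hxW.2
        set x0 := xv ⟨μ, hμ⟩ with hx0def
        have i0 : Fin n := Classical.arbitrary _
        have hx0i0 : x0 i0 ≠ 0 := hxW.1 i0
        have hkey : v = (v i0 / x0 i0) • x0 := by
          funext j
          obtain ⟨m, -, hm⟩ := hirr i0 j
          have e1 : v j = μ ^ m * v i0 := hvalign m i0 j hm
          have e2 : x0 j = μ ^ m * x0 i0 := hxalign m i0 j hm
          rw [Pi.smul_apply, smul_eq_mul, e1, e2]
          field_simp
        rw [hkey]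
        exact Submodule.smul_mem _ _ (Submodule.subset_span ⟨⟨μ, hμ⟩, rfl⟩)
      · rw [Submodule.span_le]
        rintro _ ⟨μ, rfl⟩
        have hmem : xv μ ∈ f.eigenspace (μ : ℂ) :=
          Module.End.mem_eigenspace_iff.mpr (hxveig μ)
        exact (le_iSup₂ (f := fun (ν : ℂ) (_ : ν ∈ G) => f.eigenspace ν) (μ : ℂ) μ.2) hmem
    have hfinE : Module.finrank ℂ E = k := by
      rw [hspan, finrank_span_eq_card hLI]
      rw [hkG, Set.ncard_eq_toFinset_card G hGfin]
      rw [Set.Finite.card_toFinset]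
    have hWrank : W.rank = k := by
      rw [Matrix.rank, hrangeE, hfinE]
    have hWW : W * W = W := by
      rw [hWQ]
      have hmm : ∀ A B : Matrix (Fin n) (Fin n) ℝ,
          (A * B).map (fun r : ℝ => (r : ℂ))
            = A.map (fun r : ℝ => (r : ℂ)) * B.map (fun r : ℝ => (r : ℂ)) := by
        intro A B
        have h : ∀ C : Matrix (Fin n) (Fin n) ℝ,
            C.map (fun r : ℝ => (r : ℂ)) = (algebraMap ℝ ℂ).mapMatrix C := fun C => rfl
        rw [h, h, h, _root_.map_mul]
      rw [← hmm, hQQ]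
    have hQrank : Q.rank = k := by
      have h1 : (Q.rank : ℝ) = Q.trace := rank_idem_trace Q hQQ
      have h2 : (W.rank : ℂ) = W.trace := rank_idem_trace W hWW
      have h3 : W.trace = ((Q.trace : ℝ) : ℂ) := by
        rw [hWQ]
        simp only [Matrix.trace, Matrix.diag, Matrix.map_apply]
        push_cast
        rfl
      rw [hWrank, h3, ← h1] at h2
      exact_mod_cast h2.symm
    -- the operator-norm limit
    have hopbound : ∀ A : Matrix (Fin n) (Fin n) ℂ,
        ‖LinearMap.toContinuousLinearMap A.mulVecLin‖ ≤ ∑ i, ∑ j, ‖A i j‖ := by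
      intro A
      refine ContinuousLinearMap.opNorm_le_bound _
        (Finset.sum_nonneg fun i _ => Finset.sum_nonneg fun j _ => norm_nonneg _) fun v => ?_
      have : ‖A.mulVec v‖ ≤ (∑ i, ∑ j, ‖A i j‖) * ‖v‖ := by
        rw [pi_norm_le_iff_of_nonneg (by positivity)]
        intro i
        rw [mulVec_apply']
        calc ‖∑ j, A i j * v j‖ ≤ ∑ j, ‖A i j * v j‖ := norm_sum_le _ _
          _ ≤ ∑ j, ‖A i j‖ * ‖v‖ := by
              refine Finset.sum_le_sum fun j _ => ?_
              rw [norm_mul]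
              exact mul_le_mul_of_nonneg_left (norm_le_pi_norm v j) (norm_nonneg _)
          _ = (∑ j, ‖A i j‖) * ‖v‖ := by rw [Finset.sum_mul]
          _ ≤ (∑ i', ∑ j, ‖A i' j‖) * ‖v‖ := by
              refine mul_le_mul_of_nonneg_right ?_ (norm_nonneg v)
              exact Finset.single_le_sum (f := fun i' => ∑ j, ‖A i' j‖)
                (fun i' _ => Finset.sum_nonneg fun j _ => norm_nonneg _) (Finset.mem_univ i)
      exact this
    refine ⟨Q, hQtend, hQQ, hPQ, hQpos, hQrow, hQrank, ?_⟩
    intro ρ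
    set T : ℕ → ((Fin n → ℂ) →L[ℂ] ℂ) := fun r => ρ.comp (LinearMap.toContinuousLinearMap
      (((P ^ r).map (fun t : ℝ => (t : ℂ))).mulVecLin)) with hTdef
    set TQ : (Fin n → ℂ) →L[ℂ] ℂ := ρ.comp (LinearMap.toContinuousLinearMap
      ((Q.map (fun t : ℝ => (t : ℂ))).mulVecLin)) with hTQdef
    have hanti : Antitone fun r => ‖T r‖ := by
      refine antitone_nat_of_succ_le fun r => ?_
      have hcompose : T (r + 1) = (T r).comp (LinearMap.toContinuousLinearMap Pc.mulVecLin) := by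
        refine ContinuousLinearMap.ext fun v => ?_
        show ρ (((P ^ (r + 1)).map (fun t : ℝ => (t : ℂ))).mulVec v)
          = ρ (((P ^ r).map (fun t : ℝ => (t : ℂ))).mulVec (Pc.mulVec v))
        congr 1
        rw [Matrix.mulVec_mulVec]
        congr 1
        rw [map_pow', map_pow', pow_succ]
      have hPcnorm : ‖LinearMap.toContinuousLinearMap Pc.mulVecLin‖ ≤ 1 := by
        refine ContinuousLinearMap.opNorm_le_bound _ zero_le_one fun v => ?_
        rw [one_mul]
        exact mulVec_contract hpos hrow v
      calc ‖T (r + 1)‖ ≤ ‖T r‖ * ‖LinearMap.toContinuousLinearMap Pc.mulVecLin‖ := by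
            rw [hcompose]; exact ContinuousLinearMap.opNorm_comp_le _ _
        _ ≤ ‖T r‖ * 1 := mul_le_mul_of_nonneg_left hPcnorm (norm_nonneg _)
        _ = ‖T r‖ := mul_one _
    have hbdd : BddBelow (Set.range fun r => ‖T r‖) := by
      refine ⟨0, ?_⟩
      rintro x ⟨r, rfl⟩
      exact norm_nonneg _
    have hlim : Tendsto (fun r => ‖T r‖) atTop (nhds (⨅ r, ‖T r‖)) :=
      tendsto_atTop_ciInf hanti hbdd
    have hsubnorm : Tendsto (fun m : ℕ => ‖T (k * (m + 1))‖) atTop (nhds ‖TQ‖) := by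
      have hdiff : ∀ m : ℕ, ‖T (k * (m + 1)) - TQ‖
          ≤ ‖ρ‖ * ∑ i, ∑ j, ‖(((P ^ (k * (m + 1))) i j : ℝ) : ℂ) - ((Q i j : ℝ) : ℂ)‖ := by
        intro m
        have heq : T (k * (m + 1)) - TQ = ρ.comp (LinearMap.toContinuousLinearMap
            (((P ^ (k * (m + 1))).map (fun t : ℝ => (t : ℂ))
              - Q.map (fun t : ℝ => (t : ℂ))).mulVecLin)) := by
          refine ContinuousLinearMap.ext fun v => ?_
          show ρ (((P ^ (k * (m + 1))).map (fun t : ℝ => (t : ℂ))).mulVec v)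
              - ρ ((Q.map (fun t : ℝ => (t : ℂ))).mulVec v)
            = ρ ((((P ^ (k * (m + 1))).map (fun t : ℝ => (t : ℂ))
              - Q.map (fun t : ℝ => (t : ℂ))).mulVec v))
          rw [Matrix.sub_mulVec, map_sub]
        rw [heq]
        calc ‖ρ.comp _‖ ≤ ‖ρ‖ * ‖LinearMap.toContinuousLinearMap
              (((P ^ (k * (m + 1))).map (fun t : ℝ => (t : ℂ))
                - Q.map (fun t : ℝ => (t : ℂ))).mulVecLin)‖ :=
            ContinuousLinearMap.opNorm_comp_le _ _
          _ ≤ ‖ρ‖ * ∑ i, ∑ j, ‖(((P ^ (k * (m + 1))) i j : ℝ) : ℂ) - ((Q i j : ℝ) : ℂ)‖ := by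
              refine mul_le_mul_of_nonneg_left ?_ (norm_nonneg ρ)
              have := hopbound ((P ^ (k * (m + 1))).map (fun t : ℝ => (t : ℂ))
                - Q.map (fun t : ℝ => (t : ℂ)))
              simpa [Matrix.sub_apply, Matrix.map_apply] using this
      have hzero : Tendsto (fun m : ℕ => ‖ρ‖ * ∑ i, ∑ j,
          ‖(((P ^ (k * (m + 1))) i j : ℝ) : ℂ) - ((Q i j : ℝ) : ℂ)‖) atTop (nhds 0) := by
        have h1 : Tendsto (fun m : ℕ => ∑ i, ∑ j,
            ‖(((P ^ (k * (m + 1))) i j : ℝ) : ℂ) - ((Q i j : ℝ) : ℂ)‖) atTop (nhds 0) := by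
          have : (0 : ℝ) = ∑ i : Fin n, ∑ j : Fin n, (0 : ℝ) := by simp
          rw [this]
          refine tendsto_finset_sum _ fun i _ => tendsto_finset_sum _ fun j _ => ?_
          have h2 : Tendsto (fun m : ℕ => (P ^ (k * (m + 1))) i j - Q i j)
              atTop (nhds 0) := by
            simpa using (hQtend i j).sub (tendsto_const_nhds (x := Q i j))
          have h3 : ∀ m : ℕ, ‖(((P ^ (k * (m + 1))) i j : ℝ) : ℂ) - ((Q i j : ℝ) : ℂ)‖
              = |(P ^ (k * (m + 1))) i j - Q i j| := by
            intro m
            rw [← Complex.ofReal_sub, Complex.norm_real, Real.norm_eq_abs]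
          simp only [h3]
          simpa using h2.abs
        simpa using h1.const_mul ‖ρ‖
      have hT2 : Tendsto (fun m : ℕ => T (k * (m + 1))) atTop (nhds TQ) := by
        rw [tendsto_iff_norm_sub_tendsto_zero]
        exact squeeze_zero (fun m => norm_nonneg _) hdiff hzero
      exact hT2.norm
    have hfinal : (⨅ r, ‖T r‖) = ‖TQ‖ :=
      tendsto_nhds_unique (hlim.comp htendk) hsubnorm
    rw [← hfinal]
    exact hlim
end

section
/- Let V be a finite-dimensional complex normed space, let T : V → V be linear, and let Q : V → V be an idempotent linear map (Q ∘ Q = Q) commuting with T such that every eigenvalue of the restriction of T to range(id − Q) has modulus strictly less than 1. Then there exist constants c > 0 and r with 0 < r < 1 such that ‖T^n − T^n ∘ Q‖ ≤ c r^n for all n ≥ 1. -/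
/-!
Put `S = T (1 - Q)`. Since `1 - Q` is an idempotent commuting with `T`,
`Sⁿ = Tⁿ (1 - Q) = Tⁿ - Tⁿ Q` for `n ≥ 1`. An eigenvector of `S` for a nonzero eigenvalue `z` is
fixed by `1 - Q`, hence is an eigenvector of `T` for `z` lying in `range (1 - Q)`; so every point
of the spectrum of `S` has modulus `< 1`. The spectral radius of `S` is then `< 1`, and Gelfand's
formula gives `‖Sⁿ‖ ≤ c rⁿ` for any `r` strictly between it and `1`.
-/

open Filter

theorem spectralRadius_lt_one_of_forall_norm_lt_one {𝕜 A : Type*} [NormedField 𝕜]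
    [ProperSpace 𝕜] [NormedRing A] [NormedAlgebra 𝕜 A] [CompleteSpace A] {a : A}
    (h : ∀ z ∈ spectrum 𝕜 a, ‖z‖ < 1) : spectralRadius 𝕜 a < 1 := by
  rcases (spectrum 𝕜 a).eq_empty_or_nonempty with hempty | hne
  · simp [spectralRadius, hempty]
  · exact_mod_cast spectrum.spectralRadius_lt_of_forall_lt_of_nonempty hne (r := 1)
      fun z hz => by exact_mod_cast h z hz

theorem eventually_norm_pow_le_pow_of_spectralRadius_lt {A : Type*} [NormedRing A]
    [NormedAlgebra ℂ A] [CompleteSpace A] {a : A} {r : ℝ}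
    (h : spectralRadius ℂ a < ENNReal.ofReal r) :
    ∀ᶠ n in atTop, ‖a ^ n‖ ≤ r ^ n := by
  filter_upwards
    [(spectrum.pow_norm_pow_one_div_tendsto_nhds_spectralRadius a).eventually_lt_const h,
    eventually_gt_atTop 0] with n hn hn0
  have hr : 0 < r := ENNReal.ofReal_pos.mp (pos_of_gt hn)
  rw [ENNReal.ofReal_lt_ofReal_iff hr, one_div,
    Real.rpow_inv_lt_iff_of_pos (norm_nonneg _) hr.le (by exact_mod_cast hn0)] at hn
  exact_mod_cast hn.le

theorem exists_norm_pow_le_of_spectralRadius_lt_one {A : Type*} [NormedRing A]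
    [NormedAlgebra ℂ A] [CompleteSpace A] {a : A} (h : spectralRadius ℂ a < 1) :
    ∃ c r : ℝ, 0 < c ∧ 0 < r ∧ r < 1 ∧ ∀ n, ‖a ^ n‖ ≤ c * r ^ n := by
  obtain ⟨r₀, -, hr₀, hr₀_lt_one⟩ := ENNReal.lt_iff_exists_real_btwn.mp h
  have hiff := (TFAE_exists_lt_isLittleO_pow (fun n => ‖a ^ n‖) 1).out 6 5
  obtain ⟨r, ⟨hr0, hr1⟩, c, hc, hbound⟩ := hiff.mp ⟨r₀, by simpa using hr₀_lt_one,
    by simpa only [abs_norm] using eventually_norm_pow_le_pow_of_spectralRadius_lt hr₀⟩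
  exact ⟨c, r, hc, hr0, hr1, fun n => by simpa only [abs_norm] using hbound n⟩

theorem IsIdempotentElem.pow_sub_pow_mul_eq_mul_one_sub_pow {R : Type*} [Ring R] {p t : R}
    (hp : IsIdempotentElem p) (htp : Commute t p) {n : ℕ} (hn : n ≠ 0) :
    t ^ n - t ^ n * p = (t * (1 - p)) ^ n := by
  rw [((Commute.one_right t).sub_right htp).mul_pow, hp.one_sub.pow_eq hn, mul_sub, mul_one]

theorem Module.End.exists_eigenvector_mem_range_of_mem_spectrum_mul {K V : Type*} [Field K]
    [AddCommGroup V] [Module K V] [FiniteDimensional K V] {t p : Module.End K V}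
    (hp : IsIdempotentElem p) (htp : Commute t p) {z : K} (hz0 : z ≠ 0)
    (hz : z ∈ spectrum K (t * p)) : ∃ x ∈ LinearMap.range p, x ≠ 0 ∧ t x = z • x := by
  obtain ⟨x, hx⟩ := (Module.End.hasEigenvalue_iff_mem_spectrum.mpr hz).exists_hasEigenvector
  have hxe : (t * p) x = z • x := hx.apply_eq_smul
  have hpx : p x = x := by
    have : p ((t * p) x) = (t * p) x := by
      rw [← Module.End.mul_apply, ← mul_assoc, ← htp.eq, mul_assoc, hp.eq]
    rw [hxe, map_smul] at this
    exact smul_right_injective V hz0 this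
  refine ⟨x, ⟨x, hpx⟩, hx.2, ?_⟩
  rw [← hxe, Module.End.mul_apply, hpx]

/-- Let `V` be a finite-dimensional complex normed space,
`T : V → V` linear, and `Q : V → V` an idempotent linear map commuting with `T` such
that every eigenvalue of the restriction of `T` to `range(id − Q)` (equivalently,
every `λ` admitting an eigenvector of `T` lying in `range(id − Q)`) has modulus
strictly less than one.  Then there are constants `c > 0` and `0 < r < 1` with
`‖T^n − T^n ∘ Q‖ ≤ c rⁿ` for all `n ≥ 1`. -/
theorem stmt14 {V : Type*} [NormedAddCommGroup V] [NormedSpace ℂ V]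
    [FiniteDimensional ℂ V]
    (T Q : V →L[ℂ] V)
    (hidem : Q.comp Q = Q)
    (hcomm : T.comp Q = Q.comp T)
    (heig : ∀ lam : ℂ,
      (∃ x ∈ LinearMap.range (((1 : V →L[ℂ] V) - Q : V →L[ℂ] V) : V →ₗ[ℂ] V), x ≠ 0 ∧ T x = lam • x) →
      ‖lam‖ < 1) :
    ∃ c r : ℝ, 0 < c ∧ 0 < r ∧ r < 1 ∧
      ∀ n : ℕ, 1 ≤ n → ‖T ^ n - (T ^ n).comp Q‖ ≤ c * r ^ n := by
  have hQ : IsIdempotentElem Q := hidem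
  have hTQ : Commute T Q := hcomm
  have hTP : Commute T (1 - Q) := (Commute.one_right T).sub_right hTQ
  have hspec : ∀ z ∈ spectrum ℂ (T * (1 - Q)), ‖z‖ < 1 := by
    intro z hz
    rcases eq_or_ne z 0 with rfl | hz0
    · simp
    rw [ContinuousLinearMap.spectrum_eq] at hz
    exact heig z <| Module.End.exists_eigenvector_mem_range_of_mem_spectrum_mul
      (hQ.one_sub.map ContinuousLinearMap.toLinearMapRingHom)
      (hTP.map ContinuousLinearMap.toLinearMapRingHom) hz0 hz
  obtain ⟨c, r, hc, hr0, hr1, hbound⟩ :=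
    exists_norm_pow_le_of_spectralRadius_lt_one <|
      spectralRadius_lt_one_of_forall_norm_lt_one hspec
  refine ⟨c, r, hc, hr0, hr1, fun n hn => ?_⟩
  change ‖T ^ n - T ^ n * Q‖ ≤ _
  rw [hQ.pow_sub_pow_mul_eq_mul_one_sub_pow hTQ (by omega)]
  exact hbound n
end

section
/- Let M be a complex normed space and L : M → M a bounded linear map, and for i = 1, 2 let (N_i, α_i, E_i) be nondegenerate reversible lifts of L. If θ : N₁ → N₂ is a linear map satisfying θ ∘ α₁ = α₂ ∘ θ and E₂ ∘ θ = E₁, then θ is injective. -/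
namespace LinearIsometryEquiv

variable {R E F : Type*} [Semiring R] [SeminormedAddCommGroup E] [Module R E]
  [SeminormedAddCommGroup F] [Module R F]

theorem semiconj_zpow {f : E → F} {e₁ : E ≃ₗᵢ[R] E} {e₂ : F ≃ₗᵢ[R] F}
    (h : Function.Semiconj f e₁ e₂) (n : ℤ) : Function.Semiconj f ⇑(e₁ ^ n) ⇑(e₂ ^ n) := by
  induction n using Int.induction_on with
  | zero => exact Function.Semiconj.id_right
  | succ n ih => simpa only [zpow_add_one, coe_mul] using ih.comp_right h
  | pred n ih =>
    simpa only [zpow_sub_one, coe_mul, coe_inv] using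
      ih.comp_right (h.inverses_right e₁.apply_symm_apply e₂.symm_apply_apply)

end LinearIsometryEquiv

theorem stmt15_general {M N₁ N₂ : Type*} [NormedAddCommGroup M] [NormedSpace ℂ M]
    [NormedAddCommGroup N₁] [NormedSpace ℂ N₁]
    [NormedAddCommGroup N₂] [NormedSpace ℂ N₂]
    (L : M →L[ℂ] M)
    (α₁ : N₁ ≃ₗᵢ[ℂ] N₁) (E₁ : N₁ →L[ℂ] M)
    (hnd₁ : ∀ y : N₁, (∀ n : ℕ, E₁ ((α₁ ^ (-(n : ℤ))) y) = 0) → y = 0)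
    (α₂ : N₂ ≃ₗᵢ[ℂ] N₂) (E₂ : N₂ →L[ℂ] M)
    (θ : N₁ →ₗ[ℂ] N₂)
    (hθα : ∀ y : N₁, θ (α₁ y) = α₂ (θ y))
    (hθE : ∀ y : N₁, E₂ (θ y) = E₁ y) :
    Function.Injective θ := by
  refine (injective_iff_map_eq_zero θ).2 fun y hy => hnd₁ y fun n => ?_
  rw [← hθE, LinearIsometryEquiv.semiconj_zpow hθα, hy, map_zero, map_zero]

/-- Let `M` be a complex normed space and `L : M → M` bounded linear,
and for `i = 1, 2` let `(Nᵢ, αᵢ, Eᵢ)` be nondegenerate reversible lifts of `L`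
(`αᵢ` a surjective linear isometry of the normed space `Nᵢ`, `Eᵢ : Nᵢ → M` linear with
`‖Eᵢ‖ ≤ 1` and `Eᵢ ∘ αᵢ = L ∘ Eᵢ`; nondegeneracy: `Eᵢ(αᵢ^{-n}(y)) = 0` for all `n ≥ 0`
implies `y = 0`).  If `θ : N₁ → N₂` is a linear map with `θ ∘ α₁ = α₂ ∘ θ` and
`E₂ ∘ θ = E₁`, then `θ` is injective. -/
theorem stmt15 {M N₁ N₂ : Type*} [NormedAddCommGroup M] [NormedSpace ℂ M]
    [NormedAddCommGroup N₁] [NormedSpace ℂ N₁]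
    [NormedAddCommGroup N₂] [NormedSpace ℂ N₂]
    (L : M →L[ℂ] M)
    (α₁ : N₁ ≃ₗᵢ[ℂ] N₁) (E₁ : N₁ →L[ℂ] M) (hE₁ : ‖E₁‖ ≤ 1)
    (hEq₁ : ∀ y : N₁, E₁ (α₁ y) = L (E₁ y))
    (hnd₁ : ∀ y : N₁, (∀ n : ℕ, E₁ ((α₁ ^ (-(n : ℤ))) y) = 0) → y = 0)
    (α₂ : N₂ ≃ₗᵢ[ℂ] N₂) (E₂ : N₂ →L[ℂ] M) (hE₂ : ‖E₂‖ ≤ 1)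
    (hEq₂ : ∀ y : N₂, E₂ (α₂ y) = L (E₂ y))
    (hnd₂ : ∀ y : N₂, (∀ n : ℕ, E₂ ((α₂ ^ (-(n : ℤ))) y) = 0) → y = 0)
    (θ : N₁ →ₗ[ℂ] N₂)
    (hθα : ∀ y : N₁, θ (α₁ y) = α₂ (θ y))
    (hθE : ∀ y : N₁, E₂ (θ y) = E₁ y) :
    Function.Injective θ :=
  stmt15_general L α₁ E₁ hnd₁ α₂ E₂ θ hθα hθE
end

section
/- Let M be a complex normed space and L : M → M a bounded linear map, and for i = 1, 2 let (N_i, α_i, E_i) be nondegenerate reversible lifts of L. Suppose there exist linear maps θ : N₁ → N₂ and φ : N₂ → N₁ satisfying θ ∘ α₁ = α₂ ∘ θ, E₂ ∘ θ = E₁, φ ∘ α₂ = α₁ ∘ φ, and E₁ ∘ φ = E₂. Then φ ∘ θ is the identity map of N₁ and θ ∘ φ is the identity map of N₂; in particular θ is a linear bijection. -/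
open Function

namespace LinearIsometryEquiv

variable {R N₁ N₂ : Type*} [Semiring R] [SeminormedAddCommGroup N₁] [Module R N₁]
  [SeminormedAddCommGroup N₂] [Module R N₂]

theorem semiconj_zpow_s16 {f : N₁ → N₂} {α₁ : N₁ ≃ₗᵢ[R] N₁} {α₂ : N₂ ≃ₗᵢ[R] N₂}
    (h : Semiconj f α₁ α₂) (n : ℤ) : Semiconj f ⇑(α₁ ^ n) ⇑(α₂ ^ n) := by
  have h_inv : Semiconj f α₁.symm α₂.symm :=
    h.inverses_right α₁.apply_symm_apply α₂.symm_apply_apply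
  induction n using Int.induction_on with
  | zero => exact Semiconj.id_right
  | succ k ih => simpa only [zpow_add_one, coe_mul] using ih.comp_right h
  | pred k ih => simpa only [zpow_sub_one, coe_mul, coe_inv] using ih.comp_right h_inv

end LinearIsometryEquiv

theorem LinearMap.eq_self_of_commute_of_comp_eq {R N M : Type*} [Ring R]
    [SeminormedAddCommGroup N] [Module R N] [AddCommGroup M] [Module R M]
    (ψ : N →ₗ[R] N) (α : N ≃ₗᵢ[R] N) (E : N →ₗ[R] M)
    (hnd : ∀ y : N, (∀ n : ℕ, E ((α ^ (-(n : ℤ))) y) = 0) → y = 0)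
    (hψα : ∀ y, ψ (α y) = α (ψ y)) (hψE : ∀ y, E (ψ y) = E y) (y : N) :
    ψ y = y := by
  refine sub_eq_zero.mp (hnd _ fun n => ?_)
  rw [map_sub, map_sub, ← LinearIsometryEquiv.semiconj_zpow_s16 hψα, hψE, sub_self]

theorem stmt16_general {M N₁ N₂ : Type*} [NormedAddCommGroup M] [NormedSpace ℂ M]
    [NormedAddCommGroup N₁] [NormedSpace ℂ N₁]
    [NormedAddCommGroup N₂] [NormedSpace ℂ N₂]
    (L : M →L[ℂ] M)
    (α₁ : N₁ ≃ₗᵢ[ℂ] N₁) (E₁ : N₁ →L[ℂ] M)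
    (hnd₁ : ∀ y : N₁, (∀ n : ℕ, E₁ ((α₁ ^ (-(n : ℤ))) y) = 0) → y = 0)
    (α₂ : N₂ ≃ₗᵢ[ℂ] N₂) (E₂ : N₂ →L[ℂ] M)
    (hnd₂ : ∀ y : N₂, (∀ n : ℕ, E₂ ((α₂ ^ (-(n : ℤ))) y) = 0) → y = 0)
    (θ : N₁ →ₗ[ℂ] N₂) (φ : N₂ →ₗ[ℂ] N₁)
    (hθα : ∀ y : N₁, θ (α₁ y) = α₂ (θ y))
    (hθE : ∀ y : N₁, E₂ (θ y) = E₁ y)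
    (hφα : ∀ y : N₂, φ (α₂ y) = α₁ (φ y))
    (hφE : ∀ y : N₂, E₁ (φ y) = E₂ y) :
    (∀ y : N₁, φ (θ y) = y) ∧ (∀ y : N₂, θ (φ y) = y) ∧ Function.Bijective θ := by
  have hφθ : ∀ y, φ (θ y) = y :=
    (φ ∘ₗ θ).eq_self_of_commute_of_comp_eq α₁ E₁.toLinearMap hnd₁
      (fun y => by simp only [LinearMap.comp_apply, hθα, hφα])
      (fun y => by simp only [LinearMap.comp_apply, ContinuousLinearMap.coe_coe, hφE, hθE])
  have hθφ : ∀ y, θ (φ y) = y :=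
    (θ ∘ₗ φ).eq_self_of_commute_of_comp_eq α₂ E₂.toLinearMap hnd₂
      (fun y => by simp only [LinearMap.comp_apply, hφα, hθα])
      (fun y => by simp only [LinearMap.comp_apply, ContinuousLinearMap.coe_coe, hθE, hφE])
  exact ⟨hφθ, hθφ, bijective_iff_has_inverse.mpr ⟨φ, hφθ, hθφ⟩⟩

/-- Let `M` be a complex normed space and `L : M → M` bounded linear,
and for `i = 1, 2` let `(Nᵢ, αᵢ, Eᵢ)` be nondegenerate reversible lifts of `L`.
Suppose `θ : N₁ → N₂` and `φ : N₂ → N₁` are linear maps with `θ ∘ α₁ = α₂ ∘ θ`,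
`E₂ ∘ θ = E₁`, `φ ∘ α₂ = α₁ ∘ φ`, and `E₁ ∘ φ = E₂`.  Then `φ ∘ θ = id_{N₁}` and
`θ ∘ φ = id_{N₂}`; in particular `θ` is a linear bijection. -/
theorem stmt16 {M N₁ N₂ : Type*} [NormedAddCommGroup M] [NormedSpace ℂ M]
    [NormedAddCommGroup N₁] [NormedSpace ℂ N₁]
    [NormedAddCommGroup N₂] [NormedSpace ℂ N₂]
    (L : M →L[ℂ] M)
    (α₁ : N₁ ≃ₗᵢ[ℂ] N₁) (E₁ : N₁ →L[ℂ] M) (hE₁ : ‖E₁‖ ≤ 1)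
    (hEq₁ : ∀ y : N₁, E₁ (α₁ y) = L (E₁ y))
    (hnd₁ : ∀ y : N₁, (∀ n : ℕ, E₁ ((α₁ ^ (-(n : ℤ))) y) = 0) → y = 0)
    (α₂ : N₂ ≃ₗᵢ[ℂ] N₂) (E₂ : N₂ →L[ℂ] M) (hE₂ : ‖E₂‖ ≤ 1)
    (hEq₂ : ∀ y : N₂, E₂ (α₂ y) = L (E₂ y))
    (hnd₂ : ∀ y : N₂, (∀ n : ℕ, E₂ ((α₂ ^ (-(n : ℤ))) y) = 0) → y = 0)
    (θ : N₁ →ₗ[ℂ] N₂) (φ : N₂ →ₗ[ℂ] N₁)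
    (hθα : ∀ y : N₁, θ (α₁ y) = α₂ (θ y))
    (hθE : ∀ y : N₁, E₂ (θ y) = E₁ y)
    (hφα : ∀ y : N₂, φ (α₂ y) = α₁ (φ y))
    (hφE : ∀ y : N₂, E₁ (φ y) = E₂ y) :
    (∀ y : N₁, φ (θ y) = y) ∧ (∀ y : N₂, θ (φ y) = y) ∧ Function.Bijective θ :=
  stmt16_general L α₁ E₁ hnd₁ α₂ E₂ hnd₂ θ φ hθα hθE hφα hφE
end

section
/- Let M be a complex normed space, let L : M → M be a bounded linear map with ‖L‖ ≤ 1, and let (N, α, E) be a nondegenerate reversible lift of L. Define θ : N → S_L by θ(y) = (E(α^{-n}(y)))_{n∈ℤ}. Then θ is well defined (for each y ∈ N, the sequence (E(α^{-n}(y)))_{n∈ℤ} is a bounded inverse sequence for L), θ is an injective linear map with ‖θ(y)‖ ≤ ‖y‖ for all y ∈ N, and θ satisfies θ ∘ α = σ ∘ θ and E₀ ∘ θ = E. -/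
/-- The space `S_L` of inverse sequences of a map `L : M → M`: norm-bounded bilateral
sequences `(x_n)_{n ∈ ℤ}` with `x_n = L (x_{n+1})` for all `n`; it carries the supremum
norm. -/
def invSeqSet {M : Type*} [Norm M] (L : M → M) : Set (ℤ → M) :=
  {x | BddAbove (Set.range fun n => ‖x n‖) ∧ ∀ n : ℤ, x n = L (x (n + 1))}

/-- The shift `σ((x_n)_{n ∈ ℤ}) = (x_{n-1})_{n ∈ ℤ}` on bilateral sequences. -/
def shiftSeq {M : Type*} (x : ℤ → M) : ℤ → M := fun n => x (n - 1)

/-- The comparison map `θ(y) = (E(α^{-n}(y)))_{n ∈ ℤ}` from `N` into bilateral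
sequences. -/
def liftTheta {M N : Type*} [NormedAddCommGroup N] [NormedSpace ℂ N]
    (E : N → M) (α : N ≃ₗᵢ[ℂ] N) : N → ℤ → M :=
  fun y n => E ((α ^ (-n)) y)

/-!
The sequence `θ(y)_n = E(α^{-n} y)` is an inverse sequence because the intertwining relation
`E ∘ α = L ∘ E` moves one step along it, and it is bounded by `‖y‖` because `α` is isometric and
`‖E‖ ≤ 1`. Since `θ` is linear, nondegeneracy of the lift, applied to `y - z`, is exactly
injectivity of `θ`.
-/

theorem LinearIsometryEquiv.zpow_one_add_apply {R N : Type*} [Semiring R]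
    [SeminormedAddCommGroup N] [Module R N] (α : N ≃ₗᵢ[R] N) (k : ℤ) (y : N) :
    (α ^ (1 + k)) y = α ((α ^ k) y) := by
  rw [zpow_one_add, LinearIsometryEquiv.coe_mul, Function.comp_apply]

theorem LinearIsometryEquiv.zpow_add_one_apply {R N : Type*} [Semiring R]
    [SeminormedAddCommGroup N] [Module R N] (α : N ≃ₗᵢ[R] N) (k : ℤ) (y : N) :
    (α ^ (k + 1)) y = (α ^ k) (α y) := by
  rw [zpow_add_one, LinearIsometryEquiv.coe_mul, Function.comp_apply]

section liftTheta

variable {M N : Type*} [NormedAddCommGroup N] [NormedSpace ℂ N] (α : N ≃ₗᵢ[ℂ] N)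

theorem liftTheta_apply_zero (E : N → M) (y : N) : liftTheta E α y 0 = E y := by
  simp [liftTheta]

theorem liftTheta_map (E : N → M) (y : N) :
    liftTheta E α (α y) = shiftSeq (liftTheta E α y) := by
  funext n
  change E ((α ^ (-n)) (α y)) = E ((α ^ (-(n - 1))) y)
  rw [← α.zpow_add_one_apply, neg_sub, sub_eq_neg_add]

theorem liftTheta_apply_eq_map_apply_add_one {L : M → M} {E : N → M}
    (hEq : ∀ y, E (α y) = L (E y)) (y : N) (n : ℤ) :
    liftTheta E α y n = L (liftTheta E α y (n + 1)) := by
  change E ((α ^ (-n)) y) = L (E ((α ^ (-(n + 1))) y))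
  rw [← hEq, ← α.zpow_one_add_apply, show 1 + -(n + 1) = -n by ring]

theorem norm_liftTheta_apply_le [Norm M] {E : N → M} (hE : ∀ z, ‖E z‖ ≤ ‖z‖) (y : N) (n : ℤ) :
    ‖liftTheta E α y n‖ ≤ ‖y‖ :=
  (hE _).trans_eq ((α ^ (-n)).norm_map y)

theorem iSup_norm_liftTheta_le [Norm M] {E : N → M} (hE : ∀ z, ‖E z‖ ≤ ‖z‖) (y : N) :
    ⨆ n, ‖liftTheta E α y n‖ ≤ ‖y‖ :=
  ciSup_le (norm_liftTheta_apply_le α hE y)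

theorem liftTheta_mem_invSeqSet [Norm M] {L : M → M} {E : N → M} (hE : ∀ z, ‖E z‖ ≤ ‖z‖)
    (hEq : ∀ y, E (α y) = L (E y)) (y : N) : liftTheta E α y ∈ invSeqSet L :=
  ⟨⟨‖y‖, Set.forall_mem_range.2 (norm_liftTheta_apply_le α hE y)⟩,
    liftTheta_apply_eq_map_apply_add_one α hEq y⟩

variable [AddCommGroup M] [Module ℂ M] {F : Type*} [FunLike F N M] [LinearMapClass F ℂ N M]

theorem liftTheta_add (E : F) (y z : N) :
    liftTheta E α (y + z) = liftTheta E α y + liftTheta E α z := by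
  funext n
  simp [liftTheta]

theorem liftTheta_sub (E : F) (y z : N) :
    liftTheta E α (y - z) = liftTheta E α y - liftTheta E α z := by
  funext n
  simp [liftTheta]

theorem liftTheta_smul (E : F) (c : ℂ) (y : N) :
    liftTheta E α (c • y) = c • liftTheta E α y := by
  funext n
  simp [liftTheta]

theorem liftTheta_injective {E : F}
    (hnd : ∀ y : N, (∀ n : ℕ, E ((α ^ (-(n : ℤ))) y) = 0) → y = 0) :
    Function.Injective (liftTheta E α) := by
  intro y z h
  rw [← sub_eq_zero]
  refine hnd _ fun n => ?_
  change liftTheta E α (y - z) n = 0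
  rw [liftTheta_sub, h, sub_self, Pi.zero_apply]

end liftTheta

theorem stmt17_general {M N : Type*} [NormedAddCommGroup M] [NormedSpace ℂ M]
    [NormedAddCommGroup N] [NormedSpace ℂ N]
    (L : M →L[ℂ] M)
    (α : N ≃ₗᵢ[ℂ] N) (E : N →L[ℂ] M) (hE : ‖E‖ ≤ 1)
    (hEq : ∀ y : N, E (α y) = L (E y))
    (hnd : ∀ y : N, (∀ n : ℕ, E ((α ^ (-(n : ℤ))) y) = 0) → y = 0) :
    -- θ is well defined into S_L
    (∀ y : N, liftTheta (⇑E) α y ∈ invSeqSet L) ∧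
    -- θ is linear
    (∀ y z : N, liftTheta (⇑E) α (y + z) = liftTheta (⇑E) α y + liftTheta (⇑E) α z) ∧
    (∀ (c : ℂ) (y : N), liftTheta (⇑E) α (c • y) = c • liftTheta (⇑E) α y) ∧
    -- θ is injective
    Function.Injective (liftTheta (⇑E) α) ∧
    -- θ is contractive for the supremum norm
    (∀ y : N, (⨆ n : ℤ, ‖liftTheta (⇑E) α y n‖) ≤ ‖y‖) ∧
    -- θ ∘ α = σ ∘ θ and E₀ ∘ θ = E
    (∀ y : N, liftTheta (⇑E) α (α y) = shiftSeq (liftTheta (⇑E) α y)) ∧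
    (∀ y : N, liftTheta (⇑E) α y 0 = E y) := by
  have norm_E_le : ∀ z, ‖E z‖ ≤ ‖z‖ := fun z => (E.le_of_opNorm_le hE z).trans_eq (one_mul _)
  exact ⟨liftTheta_mem_invSeqSet α norm_E_le hEq, liftTheta_add α E, liftTheta_smul α E,
    liftTheta_injective α hnd, iSup_norm_liftTheta_le α norm_E_le, liftTheta_map α E,
    liftTheta_apply_zero α E⟩

/-- Let `M` be a complex normed space, `L : M → M` bounded linear
with `‖L‖ ≤ 1`, and `(N, α, E)` a nondegenerate reversible lift of `L`.  Define
`θ : N → S_L` by `θ(y) = (E(α^{-n}(y)))_{n ∈ ℤ}`.  Then `θ` is well defined (each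
`θ(y)` is a bounded inverse sequence for `L`), `θ` is an injective linear map with
`‖θ(y)‖ ≤ ‖y‖` (supremum norm), and `θ ∘ α = σ ∘ θ`, `E₀ ∘ θ = E`. -/
theorem stmt17 {M N : Type*} [NormedAddCommGroup M] [NormedSpace ℂ M]
    [NormedAddCommGroup N] [NormedSpace ℂ N]
    (L : M →L[ℂ] M) (hL : ‖L‖ ≤ 1)
    (α : N ≃ₗᵢ[ℂ] N) (E : N →L[ℂ] M) (hE : ‖E‖ ≤ 1)
    (hEq : ∀ y : N, E (α y) = L (E y))
    (hnd : ∀ y : N, (∀ n : ℕ, E ((α ^ (-(n : ℤ))) y) = 0) → y = 0) :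
    -- θ is well defined into S_L
    (∀ y : N, liftTheta (⇑E) α y ∈ invSeqSet L) ∧
    -- θ is linear
    (∀ y z : N, liftTheta (⇑E) α (y + z) = liftTheta (⇑E) α y + liftTheta (⇑E) α z) ∧
    (∀ (c : ℂ) (y : N), liftTheta (⇑E) α (c • y) = c • liftTheta (⇑E) α y) ∧
    -- θ is injective
    Function.Injective (liftTheta (⇑E) α) ∧
    -- θ is contractive for the supremum norm
    (∀ y : N, (⨆ n : ℤ, ‖liftTheta (⇑E) α y n‖) ≤ ‖y‖) ∧
    -- θ ∘ α = σ ∘ θ and E₀ ∘ θ = E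
    (∀ y : N, liftTheta (⇑E) α (α y) = shiftSeq (liftTheta (⇑E) α y)) ∧
    (∀ y : N, liftTheta (⇑E) α y 0 = E y) :=
  stmt17_general L α E hE hEq hnd
end

section
/- Let M⋆ be a complex Banach space with continuous dual M, and let Λ : M → M be a normal linear map with ‖Λ‖ ≤ 1. Then there exists a linear map E : M → M with ‖E‖ ≤ 1 satisfying E ∘ Λ = Λ ∘ E = E, E ∘ E = E, and range(E) = {x ∈ M : Λ(x) = x}. (E may be obtained as a cluster point, in the topology of pointwise weak*-convergence, of the Cesàro averages A_n = (Λ + Λ² + ⋯ + Λⁿ)/n.) -/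
/-! The Cesàro averages `Aₙ = (Λ + ⋯ + Λⁿ) / n` of a contraction lie in the unit ball, so for
every `x` and `ρ` the scalars `Aₙ x ρ` converge along a fixed ultrafilter refining `atTop`, and
the limit `E` is again a contraction (Banach–Alaoglu, reduced to compactness of discs in `ℂ`).
Since `Aₙ Λ - Aₙ = (Λⁿ⁺¹ - Λ) / n` tends to zero in norm, `E Λ = E`; normality lets `Λ` pass
through the weak*-limit, and as `Λ` commutes with every `Aₙ` this gives `Λ E = E Λ = E`.
Finally `Aₙ` fixes the fixed points of `Λ`, hence so does `E`. -/

open Filter Topology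

theorem IsCompact.tendsto_limUnder_of_eventually_mem {ι X : Type*} [TopologicalSpace X]
    [Nonempty X] {s : Set X} (hs : IsCompact s) {U : Ultrafilter ι} {f : ι → X}
    (hf : ∀ᶠ i in U, f i ∈ s) : Tendsto f U (𝓝 (limUnder U f)) := by
  obtain ⟨x, -, hx⟩ := hs.ultrafilter_le_nhds (U.map f) (le_principal_iff.2 hf)
  exact tendsto_nhds_limUnder ⟨x, hx⟩

section Cesaro

variable (𝕜 : Type*) {A : Type*} [RCLike 𝕜] [NormedRing A] [NormedAlgebra 𝕜 A]

noncomputable def cesaroMean (a : A) (n : ℕ) : A :=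
  (n : 𝕜)⁻¹ • ∑ k ∈ Finset.range n, a ^ (k + 1)

variable {𝕜} {a : A}

theorem norm_cesaroMean_le (ha : ‖a‖ ≤ 1) (n : ℕ) : ‖cesaroMean 𝕜 a n‖ ≤ 1 := by
  have hsum : ‖∑ k ∈ Finset.range n, a ^ (k + 1)‖ ≤ n :=
    calc ‖∑ k ∈ Finset.range n, a ^ (k + 1)‖ ≤ ∑ k ∈ Finset.range n, ‖a ^ (k + 1)‖ :=
          norm_sum_le _ _
      _ ≤ ∑ _k ∈ Finset.range n, (1 : ℝ) := Finset.sum_le_sum fun k _ =>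
          (norm_pow_le' a k.succ_pos).trans (pow_le_one₀ (norm_nonneg a) ha)
      _ = n := by simp
  rw [cesaroMean, norm_smul, norm_inv, RCLike.norm_natCast]
  exact inv_mul_le_one_of_le₀ hsum n.cast_nonneg

theorem commute_cesaroMean (n : ℕ) : Commute a (cesaroMean 𝕜 a n) :=
  ((Commute.sum_right _ _ _ fun k _ => Commute.self_pow a (k + 1))).smul_right _

theorem cesaroMean_mul_sub_self (n : ℕ) :
    cesaroMean 𝕜 a n * a - cesaroMean 𝕜 a n = (n : 𝕜)⁻¹ • (a ^ (n + 1) - a) := by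
  have htele : (∑ k ∈ Finset.range n, a ^ (k + 1)) * a - ∑ k ∈ Finset.range n, a ^ (k + 1) =
      a ^ (n + 1) - a := by
    rw [Finset.sum_mul, ← Finset.sum_sub_distrib]
    simpa only [← pow_succ, zero_add, pow_one] using Finset.sum_range_sub (fun k => a ^ (k + 1)) n
  rw [cesaroMean, smul_mul_assoc, ← smul_sub, htele]

theorem tendsto_cesaroMean_mul_sub_self (ha : ‖a‖ ≤ 1) :
    Tendsto (fun n => cesaroMean 𝕜 a n * a - cesaroMean 𝕜 a n) atTop (𝓝 0) := by
  simp_rw [cesaroMean_mul_sub_self]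
  refine (tendsto_inv_atTop_nhds_zero_nat (𝕜 := 𝕜)).zero_smul_isBoundedUnder_le ⟨2, ?_⟩
  refine eventually_map.2 (Eventually.of_forall fun n => ?_)
  calc ‖a ^ (n + 1) - a‖ ≤ ‖a ^ (n + 1)‖ + ‖a‖ := norm_sub_le _ _
    _ ≤ 1 + 1 := by
      gcongr
      exact (norm_pow_le' a n.succ_pos).trans (pow_le_one₀ (norm_nonneg a) ha)
    _ = 2 := one_add_one_eq_two

theorem cesaroMean_apply_of_apply_eq {V : Type*} [NormedAddCommGroup V] [NormedSpace 𝕜 V]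
    {T : V →L[𝕜] V} {x : V} (hx : T x = x) {n : ℕ} (hn : n ≠ 0) :
    cesaroMean 𝕜 T n x = x := by
  have hpow (k : ℕ) : (T ^ (k + 1)) x = x := by
    rw [pow_apply_eq_iterate]
    exact Function.IsFixedPt.iterate hx _
  simp only [cesaroMean, smul_apply, sum_apply, hpow,
    Finset.sum_const, Finset.card_range, ← Nat.cast_smul_eq_nsmul 𝕜]
  exact inv_smul_smul₀ (Nat.cast_ne_zero.2 hn) x

end Cesaro

section PointwiseUltralim

open ContinuousLinearMap

variable {ι 𝕜 X Y : Type*} [RCLike 𝕜] [NormedAddCommGroup X] [NormedSpace 𝕜 X]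
  [NormedAddCommGroup Y] [NormedSpace 𝕜 Y] {U : Ultrafilter ι}
  {S : ι → Y →L[𝕜] StrongDual 𝕜 X} {C : ℝ}

theorem eventually_norm_apply_apply_le (hS : ∀ᶠ i in U, ‖S i‖ ≤ C) (y : Y) (x : X) :
    ∀ᶠ i in U, ‖S i y x‖ ≤ C * ‖y‖ * ‖x‖ :=
  hS.mono fun i hi => (le_opNorm₂ (S i) y x).trans (by gcongr)

theorem tendsto_limUnder_apply_apply (hS : ∀ᶠ i in U, ‖S i‖ ≤ C) (y : Y) (x : X) :
    Tendsto (fun i => S i y x) U (𝓝 (limUnder U fun i => S i y x)) :=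
  (isCompact_closedBall (0 : 𝕜) (C * ‖y‖ * ‖x‖)).tendsto_limUnder_of_eventually_mem <|
    (eventually_norm_apply_apply_le hS y x).mono fun _ hi => mem_closedBall_zero_iff.2 hi

variable (U) in
noncomputable def pointwiseUltralim (hS : ∀ᶠ i in U, ‖S i‖ ≤ C) : Y →L[𝕜] StrongDual 𝕜 X :=
  have h := tendsto_limUnder_apply_apply hS
  LinearMap.mkContinuous₂
    (LinearMap.mk₂ 𝕜 (fun y x => limUnder U fun i => S i y x)
      (fun y y' x => tendsto_nhds_unique (h (y + y') x)
        (((h y x).add (h y' x)).congr fun i => by simp))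
      (fun c y x => tendsto_nhds_unique (h (c • y) x)
        (((h y x).const_smul c).congr fun i => by simp))
      (fun y x x' => tendsto_nhds_unique (h y (x + x'))
        (((h y x).add (h y x')).congr fun i => by simp))
      (fun c y x => tendsto_nhds_unique (h y (c • x))
        (((h y x).const_smul c).congr fun i => by simp)))
    C fun y x => le_of_tendsto (h y x).norm (eventually_norm_apply_apply_le hS y x)

theorem tendsto_pointwiseUltralim (hS : ∀ᶠ i in U, ‖S i‖ ≤ C) (y : Y) (x : X) :
    Tendsto (fun i => S i y x) U (𝓝 (pointwiseUltralim U hS y x)) :=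
  tendsto_limUnder_apply_apply hS y x

theorem norm_pointwiseUltralim_le (hS : ∀ᶠ i in U, ‖S i‖ ≤ C) :
    ‖pointwiseUltralim U hS‖ ≤ C :=
  have ⟨i, hi⟩ := hS.exists
  opNorm_le_bound₂ _ ((norm_nonneg (S i)).trans hi) fun y x =>
    le_of_tendsto (tendsto_pointwiseUltralim hS y x).norm (eventually_norm_apply_apply_le hS y x)

end PointwiseUltralim

section CesaroUltralim

open ContinuousLinearMap

variable {𝕜 X : Type*} [RCLike 𝕜] [NormedAddCommGroup X] [NormedSpace 𝕜 X]
  (U : Ultrafilter ℕ) {T : StrongDual 𝕜 X →L[𝕜] StrongDual 𝕜 X} (hT : ‖T‖ ≤ 1)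

noncomputable def cesaroUltralim : StrongDual 𝕜 X →L[𝕜] StrongDual 𝕜 X :=
  pointwiseUltralim U (S := cesaroMean 𝕜 T) (Eventually.of_forall (norm_cesaroMean_le hT))

theorem tendsto_cesaroUltralim (x : StrongDual 𝕜 X) (ρ : X) :
    Tendsto (fun n => cesaroMean 𝕜 T n x ρ) U (𝓝 (cesaroUltralim U hT x ρ)) :=
  tendsto_pointwiseUltralim _ x ρ

theorem norm_cesaroUltralim_le : ‖cesaroUltralim U hT‖ ≤ 1 :=
  norm_pointwiseUltralim_le _

variable {U}

theorem cesaroUltralim_comp_self (hU : (U : Filter ℕ) ≤ atTop) :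
    (cesaroUltralim U hT).comp T = cesaroUltralim U hT := by
  ext x ρ
  have hdiff : Tendsto (fun n => (cesaroMean 𝕜 T n * T - cesaroMean 𝕜 T n) x ρ) U (𝓝 0) := by
    have h := (tendsto_cesaroMean_mul_sub_self (𝕜 := 𝕜) (a := T) hT).mono_left hU
    simpa using (h.eval_const x).eval_const ρ
  refine tendsto_nhds_unique (tendsto_cesaroUltralim U hT (T x) ρ) ?_
  simpa using (tendsto_cesaroUltralim U hT x ρ).add hdiff

theorem comp_cesaroUltralim (hU : (U : Filter ℕ) ≤ atTop) {Tp : X →L[𝕜] X}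
    (hTp : ∀ x ρ, T x ρ = x (Tp ρ)) :
    T.comp (cesaroUltralim U hT) = cesaroUltralim U hT := by
  ext x ρ
  have h : Tendsto (fun n => cesaroMean 𝕜 T n (T x) ρ) U
      (𝓝 (T (cesaroUltralim U hT x) ρ)) := by
    refine hTp _ ρ ▸ (tendsto_cesaroUltralim U hT x (Tp ρ)).congr fun n => ?_
    rw [← hTp, ← mul_apply_eq_comp, (commute_cesaroMean n).eq, mul_apply_eq_comp]
  calc T (cesaroUltralim U hT x) ρ = cesaroUltralim U hT (T x) ρ :=
        tendsto_nhds_unique h (tendsto_cesaroUltralim U hT (T x) ρ)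
    _ = cesaroUltralim U hT x ρ := by rw [← comp_apply, cesaroUltralim_comp_self hT hU]

theorem cesaroUltralim_apply_of_apply_eq (hU : (U : Filter ℕ) ≤ atTop) {x : StrongDual 𝕜 X}
    (hx : T x = x) :
    cesaroUltralim U hT x = x := by
  ext ρ
  refine tendsto_nhds_unique (tendsto_cesaroUltralim U hT x ρ) (tendsto_const_nhds.congr' ?_)
  filter_upwards [hU (eventually_ne_atTop 0)] with n hn
  rw [cesaroMean_apply_of_apply_eq hx hn]

end CesaroUltralim

theorem stmt18_general {Mstar : Type*}
    [NormedAddCommGroup Mstar] [NormedSpace ℂ Mstar]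
    (Λ : (Mstar →L[ℂ] ℂ) →L[ℂ] (Mstar →L[ℂ] ℂ))
    (hnormal : ∃ Λp : Mstar →L[ℂ] Mstar,
      ∀ (x : Mstar →L[ℂ] ℂ) (ρ : Mstar), Λ x ρ = x (Λp ρ))
    (hnorm : ‖Λ‖ ≤ 1) :
    ∃ E : (Mstar →L[ℂ] ℂ) →L[ℂ] (Mstar →L[ℂ] ℂ), ‖E‖ ≤ 1 ∧
      E.comp Λ = E ∧ Λ.comp E = E ∧ E.comp E = E ∧
      Set.range ⇑E = {x : Mstar →L[ℂ] ℂ | Λ x = x} := by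
  obtain ⟨Λp, hΛp⟩ := hnormal
  have hU := Ultrafilter.of_le (atTop : Filter ℕ)
  set E := cesaroUltralim (Ultrafilter.of atTop) hnorm
  have hΛE : Λ.comp E = E := comp_cesaroUltralim hnorm hU hΛp
  have hfix (x : Mstar →L[ℂ] ℂ) : Λ (E x) = E x := congr($hΛE x)
  refine ⟨E, norm_cesaroUltralim_le _ hnorm, cesaroUltralim_comp_self hnorm hU, hΛE, ?_, ?_⟩
  · ext1 x
    exact cesaroUltralim_apply_of_apply_eq hnorm hU (hfix x)
  · ext x
    exact ⟨by rintro ⟨y, rfl⟩; exact hfix y,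
      fun hx => ⟨x, cesaroUltralim_apply_of_apply_eq hnorm hU hx⟩⟩

/-- Let `M` be the continuous dual of a complex Banach space `M⋆` and
`Λ : M → M` a normal linear map with `‖Λ‖ ≤ 1`.  Then there is a linear map
`E : M → M` with `‖E‖ ≤ 1` satisfying `E ∘ Λ = Λ ∘ E = E`, `E ∘ E = E`, and
`range E = {x ∈ M : Λ(x) = x}`. -/
theorem stmt18 {Mstar : Type*}
    [NormedAddCommGroup Mstar] [NormedSpace ℂ Mstar] [CompleteSpace Mstar]
    (Λ : (Mstar →L[ℂ] ℂ) →L[ℂ] (Mstar →L[ℂ] ℂ))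
    (hnormal : ∃ Λp : Mstar →L[ℂ] Mstar,
      ∀ (x : Mstar →L[ℂ] ℂ) (ρ : Mstar), Λ x ρ = x (Λp ρ))
    (hnorm : ‖Λ‖ ≤ 1) :
    ∃ E : (Mstar →L[ℂ] ℂ) →L[ℂ] (Mstar →L[ℂ] ℂ), ‖E‖ ≤ 1 ∧
      E.comp Λ = E ∧ Λ.comp E = E ∧ E.comp E = E ∧
      Set.range ⇑E = {x : Mstar →L[ℂ] ℂ | Λ x = x} :=
  stmt18_general Λ hnormal hnorm
end
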